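/- arXiv:2204.00394 — 6 statements merged into one kernel-verified Lean document; each statement's English description precedes it below -/
import Mathlib

section
/- Let G be a countable group, A a finite alphabet, F a set of patterns, and β > 0 a real number satisfying |A| − Σ_{f∈F} |f|·β^{1−|f|} ≥ β. Then for every finite set S ⊆ G and every s ∈ G \ S, the number of locally admissible patterns satisfies |L_F^(S∪{s})| ≥ β·|L_F^(S)|. -/
/-- A pattern over a group `G` with alphabet `A`: a finite support together with
a labeling of the group elements (only the values on the support matter). -/
structure Pattern (G A : Type*) where
  supp : Finset G
  val : G → A

/-- A pattern `f` appears in a configuration `x : G → A` if some translate of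
its support carries the same letters. -/
def appearsIn {G A : Type*} [Group G] (f : Pattern G A) (x : G → A) : Prop :=
  ∃ g : G, ∀ s ∈ f.supp, x (g * s) = f.val s

/-- The subshift `X_F`: configurations avoiding every forbidden pattern. -/
def shiftSpace {G A : Type*} [Group G] (F : Set (Pattern G A)) : Set (G → A) :=
  {x | ∀ f ∈ F, ¬ appearsIn f x}

/-- Globally admissible patterns of support `S`: those appearing in some
configuration of `X_F`. -/
def globallyAdmissible {G A : Type*} [Group G] (F : Set (Pattern G A)) (S : Finset G) :
    Set ({g // g ∈ S} → A) :=
  {q | ∃ x ∈ shiftSpace F, ∃ t : G, ∀ s : {g // g ∈ S}, x (t * s.1) = q s}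

/-- `G_F^(n)`: the minimum over supports of size `n` of the number of globally
admissible patterns with that support. -/
noncomputable def globalComplexity {G A : Type*} [Group G] (F : Set (Pattern G A)) (n : ℕ) : ℕ :=
  sInf {k | ∃ S : Finset G, S.card = n ∧ (globallyAdmissible F S).ncard = k}

/-- Locally admissible patterns of support `S`: patterns in which no translate of a
forbidden pattern occurs inside `S`. -/
def locallyAdmissible {G A : Type*} [Group G] (F : Set (Pattern G A)) (S : Finset G) :
    Set ({g // g ∈ S} → A) :=
  {q | ∀ f ∈ F, ∀ g : G,
    ¬ ∃ h : ∀ s ∈ f.supp, g * s ∈ S, ∀ s, ∀ hs : s ∈ f.supp, q ⟨g * s, h s hs⟩ = f.val s}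

/-!
Each of the `|A| · |L(S)|` extensions of an admissible pattern on `S` by a letter at `s` is
either admissible on `S ∪ {s}` or contains an occurrence of some `f ∈ F` on one of the `|f|`
translates `g f` through `s`. Such a bad extension is determined by its restriction to `S \ g f`,
which is admissible; by strong induction on `S`, putting back the `|f| - 1` points of `S ∩ g f`
multiplies the number of admissible patterns by at least `β ^ (|f| - 1)`. So each `f` accounts for
at most `|f| β ^ (1 - |f|) |L(S)|` bad extensions, and the hypothesis on `β` leaves at least
`β |L(S)|` admissible ones.
-/

open scoped Pointwise

theorem Set.ncard_le_tsum_of_subset_iUnion {α ι : Type*} [Finite α] {X : Set α} {Y : ι → Set α}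
    {w : ι → ℝ} (hw : Summable w) (hY : ∀ i, ((Y i).ncard : ℝ) ≤ w i) (hX : X ⊆ ⋃ i, Y i) :
    (X.ncard : ℝ) ≤ ∑' i, w i := by
  obtain ⟨I, hI, hXI⟩ := Set.finite_subset_iUnion X.toFinite hX
  calc (X.ncard : ℝ) ≤ ((⋃ i ∈ hI.toFinset, Y i).ncard : ℝ) := by
        exact_mod_cast Set.ncard_le_ncard (by simpa using hXI)
    _ ≤ ∑ i ∈ hI.toFinset, ((Y i).ncard : ℝ) := by
        exact_mod_cast Finset.set_ncard_biUnion_le _ _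
    _ ≤ ∑ i ∈ hI.toFinset, w i := Finset.sum_le_sum fun i _ => hY i
    _ ≤ ∑' i, w i := hw.sum_le_tsum _ fun i _ => (Nat.cast_nonneg _).trans (hY i)

theorem Finset.pow_card_sdiff_mul_le {α : Type*} [DecidableEq α] {φ : Finset α → ℝ} {β : ℝ}
    (hβ : 0 ≤ β) {U : Finset α} (hstep : ∀ T ⊂ U, ∀ a ∉ T, β * φ T ≤ φ (insert a T))
    {T : Finset α} (hTU : T ⊆ U) : β ^ (U \ T).card * φ T ≤ φ U := by
  have key := Finset.induction_on' (motive := fun D => β ^ D.card * φ T ≤ φ (T ∪ D)) (U \ T)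
    (by simp) fun a D ha hD haD ih => by
      have haTD : a ∉ T ∪ D := by simp_all
      have hTD : T ∪ D ⊂ U := (Finset.ssubset_iff_of_subset
        (Finset.union_subset hTU (hD.trans Finset.sdiff_subset))).mpr
          ⟨a, (Finset.mem_sdiff.mp ha).1, haTD⟩
      calc β ^ (insert a D).card * φ T = β * (β ^ D.card * φ T) := by
            rw [Finset.card_insert_of_notMem haD, pow_succ']; ring
        _ ≤ β * φ (T ∪ D) := mul_le_mul_of_nonneg_left ih hβ
        _ ≤ φ (T ∪ insert a D) := by
            rw [Finset.union_insert]; exact hstep _ hTD a haTD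
  rwa [Finset.union_sdiff_of_subset hTU] at key

theorem Finset.inter_eq_erase_of_subset_insert {α : Type*} [DecidableEq α] {s t : Finset α}
    {a : α} (ha : a ∉ s) (h : t ⊆ insert a s) : s ∩ t = t.erase a := by
  ext x
  simp only [Finset.mem_inter, Finset.mem_erase]
  constructor
  · rintro ⟨hxs, hxt⟩
    exact ⟨ne_of_mem_of_not_mem hxs ha, hxt⟩
  · rintro ⟨hxa, hxt⟩
    exact ⟨(Finset.mem_insert.mp (h hxt)).resolve_left hxa, hxt⟩

section Extension

variable {G A : Type*} [DecidableEq G] {S : Finset G} {s : G}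

def extendPattern (s : G) (c : ({x // x ∈ S} → A) × A) : {x // x ∈ insert s S} → A :=
  fun x => if hx : x.1 ∈ S then c.1 ⟨x, hx⟩ else c.2

theorem extendPattern_of_mem (c : ({x // x ∈ S} → A) × A) (x : {x // x ∈ S}) :
    extendPattern s c ⟨x, Finset.mem_insert_of_mem x.2⟩ = c.1 x :=
  dif_pos x.2

theorem extendPattern_self (hs : s ∉ S) (c : ({x // x ∈ S} → A) × A) :
    extendPattern s c ⟨s, Finset.mem_insert_self s S⟩ = c.2 :=
  dif_neg hs

theorem extendPattern_injective (hs : s ∉ S) :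
    Function.Injective (extendPattern (A := A) s (S := S)) := fun c c' h =>
  Prod.ext
    (funext fun x => by
      simpa only [extendPattern_of_mem] using congrFun h ⟨x, Finset.mem_insert_of_mem x.2⟩)
    (by simpa only [extendPattern_self hs] using congrFun h ⟨s, Finset.mem_insert_self s S⟩)

end Extension

section Patterns

variable {G A : Type*} [Group G]

def Pattern.OccursAt (f : Pattern G A) (g : G) {S : Finset G} (q : {x // x ∈ S} → A) : Prop :=
  ∃ h : ∀ t ∈ f.supp, g * t ∈ S, ∀ t, ∀ ht : t ∈ f.supp, q ⟨g * t, h t ht⟩ = f.val t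

theorem mem_locallyAdmissible_iff {F : Set (Pattern G A)} {S : Finset G}
    {q : {x // x ∈ S} → A} : q ∈ locallyAdmissible F S ↔ ∀ f ∈ F, ∀ g, ¬ f.OccursAt g q :=
  Iff.rfl

theorem Pattern.OccursAt.apply_eq {f : Pattern G A} {g : G} {S : Finset G}
    {q : {x // x ∈ S} → A} (hf : f.OccursAt g q) {t : G} (ht : t ∈ f.supp) {x : G}
    (hx : x ∈ S) (hgt : g * t = x) : q ⟨x, hx⟩ = f.val t := by
  subst hgt
  exact hf.2 t ht

theorem Pattern.OccursAt.smul_subset [DecidableEq G] {f : Pattern G A} {g : G} {S : Finset G}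
    {q : {x // x ∈ S} → A} (hf : f.OccursAt g q) : g • f.supp ⊆ S := by
  intro x hx
  obtain ⟨t, ht, rfl⟩ := Finset.mem_smul_finset.mp hx
  exact hf.1 t ht

theorem restrict_mem_locallyAdmissible {F : Set (Pattern G A)} {S T : Finset G} (hTS : T ⊆ S)
    {q : {x // x ∈ S} → A} (hq : q ∈ locallyAdmissible F S) :
    (fun x : {x // x ∈ T} => q ⟨x, hTS x.2⟩) ∈ locallyAdmissible F T :=
  fun f hf g ⟨h, hval⟩ => hq f hf g ⟨fun t ht => hTS (h t ht), hval⟩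

end Patterns

section Counting

variable {G A : Type*} [Group G] [DecidableEq G] {F : Set (Pattern G A)}
  {S : Finset G} {s : G} {f : Pattern G A} {t : G} {β : ℝ}

def badExtensions (F : Set (Pattern G A)) (S : Finset G) (s : G) (f : Pattern G A) (t : G) :
    Set (({x // x ∈ S} → A) × A) :=
  {c | c.1 ∈ locallyAdmissible F S ∧ f.OccursAt (s * t⁻¹) (extendPattern s c)}

theorem ncard_badExtensions_le [Finite A] (hs : s ∉ S) (ht : t ∈ f.supp) :
    (badExtensions F S s f t).ncard ≤
      (locallyAdmissible F (S \ (s * t⁻¹) • f.supp)).ncard := by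
  -- `f` dictates the values on its translate, so the restriction to the complement is injective
  refine Set.ncard_le_ncard_of_injOn (fun c x => c.1 ⟨x, Finset.sdiff_subset x.2⟩)
    (fun c hc => restrict_mem_locallyAdmissible _ hc.1) ?_
  rintro c ⟨-, hocc⟩ c' ⟨-, hocc'⟩ heq
  have hvalue {c : ({x // x ∈ S} → A) × A} (hocc : f.OccursAt (s * t⁻¹) (extendPattern s c))
      (x : {x // x ∈ S}) {u : G} (hu : u ∈ f.supp) (hux : (s * t⁻¹) • u = x) : c.1 x = f.val u :=
    (extendPattern_of_mem c x).symm.trans (hocc.apply_eq hu _ hux)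
  refine Prod.ext (funext fun x => ?_) ?_
  · by_cases hx : x.1 ∈ (s * t⁻¹) • f.supp
    · obtain ⟨u, hu, hux⟩ := Finset.mem_smul_finset.mp hx
      rw [hvalue hocc x hu hux, hvalue hocc' x hu hux]
    · exact congrFun heq ⟨x, Finset.mem_sdiff.mpr ⟨x.2, hx⟩⟩
  · have hlast {c : ({x // x ∈ S} → A) × A}
        (hocc : f.OccursAt (s * t⁻¹) (extendPattern s c)) : c.2 = f.val t :=
      (extendPattern_self hs c).symm.trans (hocc.apply_eq ht _ (by group))
    rw [hlast hocc, hlast hocc']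

theorem ncard_badExtensions_le_zpow_mul [Finite A] (hβ : 0 < β)
    (hstep : ∀ T ⊂ S, ∀ a ∉ T, β * ((locallyAdmissible F T).ncard : ℝ) ≤
      ((locallyAdmissible F (insert a T)).ncard : ℝ))
    (hs : s ∉ S) (ht : t ∈ f.supp) :
    ((badExtensions F S s f t).ncard : ℝ) ≤
      β ^ (1 - (f.supp.card : ℤ)) * ((locallyAdmissible F S).ncard : ℝ) := by
  obtain hempty | ⟨c, -, hocc⟩ := (badExtensions F S s f t).eq_empty_or_nonempty
  · rw [hempty, Set.ncard_empty, Nat.cast_zero]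
    positivity
  set W := (s * t⁻¹) • f.supp
  have hsW : s ∈ W := Finset.mem_smul_finset.mpr ⟨t, ht, by simp⟩
  have hcard : (S \ (S \ W)).card = f.supp.card - 1 := by
    rw [Finset.sdiff_sdiff_self_left, Finset.inter_eq_erase_of_subset_insert hs hocc.smul_subset,
      Finset.card_erase_of_mem hsW, Finset.card_smul_finset]
  have hzpow : β ^ (1 - (f.supp.card : ℤ)) = (β ^ (f.supp.card - 1))⁻¹ := by
    have : (1 - (f.supp.card : ℤ)) = -((f.supp.card - 1 : ℕ) : ℤ) := by
      have := Finset.card_pos.mpr ⟨t, ht⟩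
      omega
    rw [this, zpow_neg, zpow_natCast]
  rw [hzpow, le_inv_mul_iff₀ (by positivity)]
  calc β ^ (f.supp.card - 1) * ((badExtensions F S s f t).ncard : ℝ)
      ≤ β ^ (f.supp.card - 1) * ((locallyAdmissible F (S \ W)).ncard : ℝ) := by
        gcongr
        exact_mod_cast ncard_badExtensions_le hs ht
    _ ≤ ((locallyAdmissible F S).ncard : ℝ) :=
        hcard ▸ Finset.pow_card_sdiff_mul_le hβ.le hstep Finset.sdiff_subset

theorem ncard_biUnion_badExtensions_le [Finite A] (hβ : 0 < β)
    (hstep : ∀ T ⊂ S, ∀ a ∉ T, β * ((locallyAdmissible F T).ncard : ℝ) ≤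
      ((locallyAdmissible F (insert a T)).ncard : ℝ))
    (hs : s ∉ S) (f : Pattern G A) :
    ((⋃ t ∈ f.supp, badExtensions F S s f t).ncard : ℝ) ≤
      f.supp.card * β ^ (1 - (f.supp.card : ℤ)) * ((locallyAdmissible F S).ncard : ℝ) := by
  calc ((⋃ t ∈ f.supp, badExtensions F S s f t).ncard : ℝ)
      ≤ ∑ t ∈ f.supp, ((badExtensions F S s f t).ncard : ℝ) := by
        exact_mod_cast Finset.set_ncard_biUnion_le _ _
    _ ≤ ∑ _t ∈ f.supp, β ^ (1 - (f.supp.card : ℤ)) * ((locallyAdmissible F S).ncard : ℝ) :=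
        Finset.sum_le_sum fun t ht => ncard_badExtensions_le_zpow_mul hβ hstep hs ht
    _ = _ := by rw [Finset.sum_const, nsmul_eq_mul, mul_assoc]

theorem diff_preimage_extendPattern_subset :
    locallyAdmissible F S ×ˢ Set.univ \ extendPattern s ⁻¹' locallyAdmissible F (insert s S) ⊆
      ⋃ f : F, ⋃ t ∈ f.1.supp, badExtensions F S s f t := by
  rintro c ⟨⟨hc, -⟩, hext⟩
  obtain ⟨f, hf, g, hocc⟩ : ∃ f ∈ F, ∃ g, f.OccursAt g (extendPattern s c) := by
    simpa [mem_locallyAdmissible_iff] using hext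
  by_cases hg : ∃ t ∈ f.supp, g * t = s
  · obtain ⟨t, ht, hgt⟩ := hg
    obtain rfl : g = s * t⁻¹ := eq_mul_inv_of_mul_eq hgt
    exact Set.mem_iUnion_of_mem ⟨f, hf⟩ (Set.mem_biUnion ht ⟨hc, hocc⟩)
  · push Not at hg
    have hmem (u : G) (hu : u ∈ f.supp) : g * u ∈ S :=
      (Finset.mem_insert.mp (hocc.1 u hu)).resolve_left (hg u hu)
    exact absurd ⟨hmem, fun u hu => (extendPattern_of_mem c ⟨_, hmem u hu⟩).symm.trans
      (hocc.2 u hu)⟩ (hc f hf g)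

theorem card_mul_ncard_le_ncard_insert_add [Finite A] (hs : s ∉ S) :
    Nat.card A * (locallyAdmissible F S).ncard ≤ (locallyAdmissible F (insert s S)).ncard +
      (locallyAdmissible F S ×ˢ Set.univ \
        extendPattern s ⁻¹' locallyAdmissible F (insert s S)).ncard := by
  calc Nat.card A * (locallyAdmissible F S).ncard
      = (locallyAdmissible F S ×ˢ (Set.univ : Set A)).ncard := by
        rw [Set.ncard_prod, Set.ncard_univ, mul_comm]
    _ = _ := (Set.ncard_inter_add_ncard_sdiff_eq_ncard _ _).symm
    _ ≤ _ := Nat.add_le_add_right (Set.ncard_le_ncard_of_injOn _ (fun c hc => hc.2)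
        (extendPattern_injective hs).injOn) _

end Counting

theorem locallyAdmissible_extension_general {G A : Type*} [Group G] [DecidableEq G] [Fintype A]
    (F : Set (Pattern G A))
    (β : ℝ) (hβ : 0 < β)
    (hsum : Summable fun f : F => (f.1.supp.card : ℝ) * β ^ (1 - (f.1.supp.card : ℤ)))
    (hcond : (Fintype.card A : ℝ) -
        ∑' f : F, (f.1.supp.card : ℝ) * β ^ (1 - (f.1.supp.card : ℤ)) ≥ β)
    (S : Finset G) (s : G) (hs : s ∉ S) :
    β * ((locallyAdmissible F S).ncard : ℝ)
      ≤ ((locallyAdmissible F (insert s S)).ncard : ℝ) := by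
  induction S using Finset.strongInduction generalizing s with
  | H S ih =>
  set σ := ∑' f : F, (f.1.supp.card : ℝ) * β ^ (1 - (f.1.supp.card : ℤ))
  have hbad : ((locallyAdmissible F S ×ˢ Set.univ \
      extendPattern s ⁻¹' locallyAdmissible F (insert s S)).ncard : ℝ) ≤
        σ * (locallyAdmissible F S).ncard := by
    rw [← tsum_mul_right]
    exact Set.ncard_le_tsum_of_subset_iUnion (hsum.mul_right _)
      (fun f => ncard_biUnion_badExtensions_le hβ ih hs f) diff_preimage_extendPattern_subset
  have hcount : ((Nat.card A * (locallyAdmissible F S).ncard : ℕ) : ℝ) ≤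
      (locallyAdmissible F (insert s S)).ncard + σ * (locallyAdmissible F S).ncard := by
    refine le_trans ?_ (add_le_add_right hbad _)
    exact_mod_cast card_mul_ncard_le_ncard_insert_add hs
  rw [Nat.cast_mul, Nat.card_eq_fintype_card] at hcount
  linarith [mul_le_mul_of_nonneg_right hcond (Nat.cast_nonneg (locallyAdmissible F S).ncard)]

/-- Main counting lemma: if `|A| - ∑_{f∈F} |f|·β^{1-|f|} ≥ β` then adding one point to
the support multiplies the number of locally admissible patterns by at least `β`. -/
theorem locallyAdmissible_extension {G A : Type*} [Group G] [DecidableEq G] [Countable G] [Fintype A]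
    (F : Set (Pattern G A)) (hne : ∀ f ∈ F, f.supp.Nonempty)
    (β : ℝ) (hβ : 0 < β)
    (hsum : Summable fun f : F => (f.1.supp.card : ℝ) * β ^ (1 - (f.1.supp.card : ℤ)))
    (hcond : (Fintype.card A : ℝ) -
        ∑' f : F, (f.1.supp.card : ℝ) * β ^ (1 - (f.1.supp.card : ℤ)) ≥ β)
    (S : Finset G) (s : G) (hs : s ∉ S) :
    β * ((locallyAdmissible F S).ncard : ℝ)
      ≤ ((locallyAdmissible F (insert s S)).ncard : ℝ) :=
  locallyAdmissible_extension_general F β hβ hsum hcond S s hs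
end

section
/- For every infinite countable group G and every ε > 0, there exists a subshift X ⊆ {0,1}^G that is strongly aperiodic and has growth α(X) ≥ 2 − ε. -/
/-!
Enumerate the nontrivial elements `s i` of `G` and choose test sets `T i` with
`T i ∩ s i • T i = ∅` and `#(T i)` growing fast. Forbidding every pattern that is
`s i`-periodic on `T i ∪ s i • T i` makes the subshift strongly aperiodic.

For the growth, count the subsets of a finite `E` that break every test lying in `E`. Adding a
point `g` to `E` gives twice as many candidates. A bad candidate is periodic on a test through
`g`, hence determined by its values off the half of that test containing `g`; so by induction
each such test has at most `1 / β ^ (#(T i) - 1)` times as many bad candidates as there are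
admissible sets on `E \ {g}`. As the tests through `g` carry total weight at most `2 - β`, each
point multiplies the count by at least `β`. Hence every support `S` carries at least `β ^ #S`
restrictions of admissible sets, which by compactness are globally admissible, and Fekete's
lemma applied to the submultiplicative sequence `globalComplexity F n` gives growth `≥ β`.
-/

open Finset Filter Topology
open scoped Classical

section FinsetFamilies

variable {α : Type*}

theorem Finset.card_union_image_insert {𝒜 : Finset (Finset α)} {a : α}
    (h𝒜 : ∀ u ∈ 𝒜, a ∉ u) :
    #(𝒜 ∪ 𝒜.image (insert a)) = 2 * #𝒜 := by
  have hdisj : Disjoint 𝒜 (𝒜.image (insert a)) := by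
    simp only [disjoint_left, mem_image, not_exists, not_and]
    rintro u hu v - rfl
    exact h𝒜 _ hu (mem_insert_self a v)
  have hinj : Set.InjOn (insert a) (𝒜 : Set (Finset α)) := fun u hu v hv huv => by
    rw [← erase_insert (h𝒜 u hu), ← erase_insert (h𝒜 v hv), huv]
  rw [card_union_of_disjoint hdisj, card_image_of_injOn hinj, two_mul]

theorem Finset.injOn_sdiff_of_forall_exists_iff {𝒱 : Set (Finset α)} {R : Finset α}
    (hR : ∀ a ∈ R, ∃ b ∉ R, ∀ u ∈ 𝒱, (a ∈ u ↔ b ∈ u)) :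
    Set.InjOn (· \ R) 𝒱 := by
  intro u hu v hv (huv : u \ R = v \ R)
  ext a
  by_cases ha : a ∈ R
  · obtain ⟨b, hb, hab⟩ := hR a ha
    have hbuv : b ∈ u \ R ↔ b ∈ v \ R := by rw [huv]
    simpa [hab u hu, hab v hv, hb] using hbuv
  · have hauv : a ∈ u \ R ↔ a ∈ v \ R := by rw [huv]
    simpa [ha] using hauv

theorem pow_card_mul_sdiff_le_of_forall_erase {f : Finset α → ℝ} {β : ℝ} (hβ : 0 ≤ β)
    {W : Finset α} (hf : ∀ E ⊆ W, ∀ g ∈ E, β * f (E.erase g) ≤ f E) {R : Finset α}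
    (hR : R ⊆ W) : β ^ #R * f (W \ R) ≤ f W := by
  induction R using Finset.induction_on with
  | empty => simp
  | @insert a R ha ih =>
    have haWR : a ∈ W \ R := mem_sdiff.2 ⟨hR (mem_insert_self a R), ha⟩
    calc β ^ #(insert a R) * f (W \ insert a R)
        = β ^ #R * (β * f ((W \ R).erase a)) := by
          rw [card_insert_of_notMem ha, sdiff_insert, pow_succ, mul_assoc]
      _ ≤ β ^ #R * f (W \ R) := by gcongr; exact hf _ sdiff_subset a haWR
      _ ≤ f W := ih ((subset_insert a R).trans hR)

end FinsetFamilies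

theorem exists_tendsto_rpow_one_div_of_submultiplicative {c : ℕ → ℝ} {β : ℝ} (hβ : 0 < β)
    (hc : ∀ n, β ^ n ≤ c n) (hmul : ∀ m n, c (m + n) ≤ c m * c n) :
    ∃ α, Tendsto (fun n : ℕ => c n ^ ((1 : ℝ) / n)) atTop (𝓝 α) ∧ β ≤ α := by
  have hpos : ∀ n, 0 < c n := fun n => (pow_pos hβ n).trans_le (hc n)
  have hsub : Subadditive fun n => Real.log (c n) := fun m n => by
    rw [← Real.log_mul (hpos m).ne' (hpos n).ne']
    exact Real.log_le_log (hpos _) (hmul m n)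
  have hlow : ∀ n : ℕ, n ≠ 0 → Real.log β ≤ Real.log (c n) / n := fun n hn => by
    rw [le_div_iff₀ (by positivity), mul_comm, ← Real.log_pow]
    exact Real.log_le_log (pow_pos hβ n) (hc n)
  have hbdd : BddBelow (Set.range fun n : ℕ => Real.log (c n) / n) := by
    refine ⟨min (Real.log β) 0, ?_⟩
    rintro _ ⟨n, rfl⟩
    rcases eq_or_ne n 0 with rfl | hn
    · simp
    · exact (min_le_left _ _).trans (hlow n hn)
  have hlim := hsub.tendsto_lim hbdd
  refine ⟨Real.exp hsub.lim, ?_, ?_⟩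
  · refine ((Real.continuous_exp.tendsto _).comp hlim).congr' ?_
    filter_upwards with n
    rw [Function.comp_apply, Real.rpow_def_of_pos (hpos n), mul_one_div]
  · have : Real.log β ≤ hsub.lim :=
      ge_of_tendsto hlim (eventually_ne_atTop 0 |>.mono hlow)
    calc β = Real.exp (Real.log β) := (Real.exp_log hβ).symm
      _ ≤ Real.exp hsub.lim := Real.exp_le_exp.2 this

section GlobalComplexity

variable {G A : Type*} [Group G]

theorem ncard_globallyAdmissible_union_image_mul_le [Finite A] (F : Set (Pattern G A))
    (S₁ S₂ : Finset G) (g : G) :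
    (globallyAdmissible F (S₁ ∪ S₂.image (g * ·))).ncard ≤
      (globallyAdmissible F S₁).ncard * (globallyAdmissible F S₂).ncard := by
  rw [← Set.ncard_prod]
  refine Set.ncard_le_ncard_of_injOn
    (fun q => (fun a => q ⟨a, mem_union_left _ a.2⟩,
      fun b => q ⟨g * b, mem_union_right _ (mem_image_of_mem _ b.2)⟩)) ?_ ?_ (Set.toFinite _)
  · rintro q ⟨x, hx, t, ht⟩
    exact ⟨⟨x, hx, t, fun a => ht ⟨a, _⟩⟩,
      ⟨x, hx, t * g, fun b => by rw [mul_assoc]; exact ht ⟨_, _⟩⟩⟩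
  · intro q _ q' _ hqq'
    funext ⟨a, ha⟩
    rcases mem_union.1 ha with ha₁ | ha₂
    · exact congrFun (congrArg Prod.fst hqq') ⟨a, ha₁⟩
    · obtain ⟨b, hb, rfl⟩ := mem_image.1 ha₂
      exact congrFun (congrArg Prod.snd hqq') ⟨b, hb⟩

theorem globalComplexity_card_le (F : Set (Pattern G A)) (S : Finset G) :
    globalComplexity F #S ≤ (globallyAdmissible F S).ncard :=
  Nat.sInf_le ⟨S, rfl, rfl⟩

theorem exists_card_eq_ncard_globallyAdmissible_eq [Infinite G] (F : Set (Pattern G A))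
    (n : ℕ) :
    ∃ S : Finset G, #S = n ∧ (globallyAdmissible F S).ncard = globalComplexity F n :=
  have ⟨S, hS⟩ := Infinite.exists_subset_card_eq G n
  Nat.sInf_mem (s := {k | ∃ S : Finset G, #S = n ∧ (globallyAdmissible F S).ncard = k})
    ⟨_, S, hS, rfl⟩

theorem globalComplexity_add_le [Infinite G] [Finite A] (F : Set (Pattern G A)) (m n : ℕ) :
    globalComplexity F (m + n) ≤ globalComplexity F m * globalComplexity F n := by
  obtain ⟨S₁, rfl, hS₁⟩ := exists_card_eq_ncard_globallyAdmissible_eq F m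
  obtain ⟨S₂, rfl, hS₂⟩ := exists_card_eq_ncard_globallyAdmissible_eq F n
  obtain ⟨g, hg⟩ := Infinite.exists_notMem_finset (image₂ (fun a b => a * b⁻¹) S₁ S₂)
  have hdisj : Disjoint S₁ (S₂.image (g * ·)) := by
    refine disjoint_left.2 fun a ha₁ ha₂ => hg ?_
    obtain ⟨b, hb, rfl⟩ := mem_image.1 ha₂
    exact mem_image₂.2 ⟨g * b, ha₁, b, hb, mul_inv_cancel_right g b⟩
  have hcard : #(S₁ ∪ S₂.image (g * ·)) = #S₁ + #S₂ := by
    rw [card_union_of_disjoint hdisj, card_image_of_injective _ (mul_right_injective g)]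
  rw [← hS₁, ← hS₂, ← hcard]
  exact (globalComplexity_card_le F _).trans (ncard_globallyAdmissible_union_image_mul_le F _ _ g)

theorem pow_le_globalComplexity [Infinite G] {F : Set (Pattern G A)} {β : ℝ}
    (hF : ∀ S : Finset G, β ^ #S ≤ (globallyAdmissible F S).ncard) (n : ℕ) :
    β ^ n ≤ globalComplexity F n := by
  obtain ⟨S, rfl, hS⟩ := exists_card_eq_ncard_globallyAdmissible_eq F n
  exact hS ▸ hF S

end GlobalComplexity

section PeriodTests

variable {ι G : Type*} [Group G] (s : ι → G) (T : ι → Finset G)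

noncomputable def testSupport (i : ι) : Finset G :=
  T i ∪ (T i).image (s i * ·)

def periodForbidden : Set (Pattern G Bool) :=
  {p | ∃ i, p.supp = testSupport s T i ∧ ∀ t ∈ T i, p.val (s i * t) = p.val t}

theorem mem_shiftSpace_periodForbidden {x : G → Bool} :
    x ∈ shiftSpace (periodForbidden s T) ↔
      ∀ i h, ∃ t ∈ T i, x (h * (s i * t)) ≠ x (h * t) := by
  constructor
  · intro hx i h
    by_contra! hper
    exact hx ⟨testSupport s T i, (x <| h * ·)⟩ ⟨i, rfl, hper⟩ ⟨h, fun _ _ => rfl⟩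
  · rintro hx p ⟨i, hsupp, hper⟩ ⟨h, hp⟩
    obtain ⟨t, ht, hne⟩ := hx i h
    have hst : s i * t ∈ p.supp := hsupp ▸ mem_union_right _ (mem_image_of_mem _ ht)
    exact hne (by rw [hp _ hst, hp t (hsupp ▸ mem_union_left _ ht), hper t ht])

theorem card_testSupport_le (i : ι) : #(testSupport s T i) ≤ 2 * #(T i) :=
  calc #(testSupport s T i) ≤ #(T i) + #((T i).image fun t => s i * t) := card_union_le _ _
    _ ≤ #(T i) + #(T i) := add_le_add_right card_image_le _
    _ = 2 * #(T i) := (two_mul _).symm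

noncomputable def testCells (i : ι) (h : G) : Finset G :=
  (testSupport s T i).image fun d => h * d

variable {s T}

theorem mul_mem_testCells {i : ι} {t : G} (ht : t ∈ T i) (h : G) :
    h * t ∈ testCells s T i h :=
  mem_image_of_mem _ (mem_union_left _ ht)

theorem mul_mul_mem_testCells {i : ι} {t : G} (ht : t ∈ T i) (h : G) :
    h * (s i * t) ∈ testCells s T i h :=
  mem_image_of_mem _ (mem_union_right _ (mem_image_of_mem _ ht))

theorem mem_image_of_mem_testCells {i : ι} {g h : G} (hg : g ∈ testCells s T i h) :
    h ∈ (testSupport s T i).image (g * ·⁻¹) := by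
  obtain ⟨d, hd, rfl⟩ := mem_image.1 hg
  exact mem_image.2 ⟨d, hd, mul_inv_cancel_right h d⟩

variable (s T)

def PeriodicOn (u : Finset G) (i : ι) (h : G) : Prop :=
  ∀ t ∈ T i, (h * (s i * t) ∈ u ↔ h * t ∈ u)

/-- A subset `u ⊆ E` stands for the configuration on `E` that is `true` exactly on `u`. -/
noncomputable def admissibleSets (E : Finset G) : Finset (Finset G) :=
  E.powerset.filter fun u => ∀ i h, testCells s T i h ⊆ E → ¬ PeriodicOn s T u i h

variable {s T}

theorem mem_admissibleSets {E u : Finset G} :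
    u ∈ admissibleSets s T E ↔
      u ⊆ E ∧ ∀ i h, testCells s T i h ⊆ E → ¬ PeriodicOn s T u i h := by
  rw [admissibleSets, mem_filter, mem_powerset]

theorem periodicOn_congr {u v W : Finset G} {i : ι} {h : G} (hW : testCells s T i h ⊆ W)
    (huv : u ∩ W = v ∩ W) : PeriodicOn s T u i h ↔ PeriodicOn s T v i h := by
  have hmem : ∀ a ∈ W, (a ∈ u ↔ a ∈ v) := fun a ha => by
    simpa [ha] using congrArg (a ∈ ·) huv
  refine forall₂_congr fun t ht => ?_
  rw [hmem _ (hW (mul_mul_mem_testCells ht h)), hmem _ (hW (mul_mem_testCells ht h))]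

theorem inter_mem_admissibleSets {E E' u : Finset G} (hu : u ∈ admissibleSets s T E)
    (hE : E' ⊆ E) : u ∩ E' ∈ admissibleSets s T E' := by
  rw [mem_admissibleSets] at hu ⊢
  refine ⟨inter_subset_right, fun i h hc => ?_⟩
  rw [periodicOn_congr hc (v := u) (by rw [inter_assoc, inter_self])]
  exact hu.2 i h (hc.trans hE)

theorem sdiff_mem_admissibleSets {E u : Finset G} (hu : u ∈ admissibleSets s T E)
    (R : Finset G) : u \ R ∈ admissibleSets s T (E \ R) := by
  have := inter_mem_admissibleSets hu (sdiff_subset (s := E) (t := R))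
  rwa [← inter_sdiff_assoc, inter_eq_left.2 (mem_admissibleSets.1 hu).1] at this

theorem admissibleSets_empty (hT : ∀ i, (T i).Nonempty) :
    admissibleSets s T (∅ : Finset G) = {∅} := by
  refine eq_singleton_iff_unique_mem.2 ⟨mem_admissibleSets.2 ⟨subset_rfl, ?_⟩,
    fun u hu => subset_empty.1 (mem_admissibleSets.1 hu).1⟩
  intro i h hc
  obtain ⟨t, ht⟩ := hT i
  exact absurd (hc (mul_mem_testCells ht h)) (notMem_empty _)

end PeriodTests

section Counting

variable {ι G : Type*} [Group G] {s : ι → G} {T : ι → Finset G}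

variable (s T) in
structure IsSparseTestFamily (β : ℝ) : Prop where
  pos : 0 < β
  disjoint : ∀ i, ∀ t ∈ T i, s i * t ∉ T i
  sum_le : ∀ K : Finset ι, ∑ i ∈ K, 2 * (#(T i) : ℝ) / β ^ (#(T i) - 1) ≤ 2 - β

theorem exists_half_testCells {i : ι} {g h : G} (hdisj : ∀ t ∈ T i, s i * t ∉ T i)
    (hg : g ∈ testCells s T i h) :
    ∃ R ⊆ testCells s T i h, g ∈ R ∧ #R = #(T i) ∧
      ∀ a ∈ R, ∃ b ∉ R, ∀ u, PeriodicOn s T u i h → (a ∈ u ↔ b ∈ u) := by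
  obtain ⟨d, hd, rfl⟩ := mem_image.1 hg
  rcases mem_union.1 hd with hd | hd
  · refine ⟨(T i).image (h * ·), fun a ha => ?_, mem_image_of_mem _ hd,
      card_image_of_injective _ (mul_right_injective h), fun a ha => ?_⟩
    · obtain ⟨t, ht, rfl⟩ := mem_image.1 ha
      exact mul_mem_testCells ht h
    · obtain ⟨t, ht, rfl⟩ := mem_image.1 ha
      refine ⟨h * (s i * t), fun hmem => ?_, fun u hu => (hu t ht).symm⟩
      obtain ⟨t', ht', heq⟩ := mem_image.1 hmem
      exact hdisj t ht (mul_left_cancel heq ▸ ht')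
  · obtain ⟨t₀, ht₀, rfl⟩ := mem_image.1 hd
    refine ⟨(T i).image fun t => h * (s i * t), fun a ha => ?_, mem_image_of_mem _ ht₀,
      card_image_of_injective _ fun a b hab => mul_left_cancel (mul_left_cancel hab),
      fun a ha => ?_⟩
    · obtain ⟨t, ht, rfl⟩ := mem_image.1 ha
      exact mul_mul_mem_testCells ht h
    · obtain ⟨t, ht, rfl⟩ := mem_image.1 ha
      refine ⟨h * t, fun hmem => ?_, fun u hu => hu t ht⟩
      obtain ⟨t', ht', heq⟩ := mem_image.1 hmem
      exact hdisj t' ht' (mul_left_cancel heq ▸ ht)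

theorem card_filter_periodicOn_le {β : ℝ} (hβ : 0 < β) {E : Finset G} {g : G}
    (hrem : ∀ R ⊆ E.erase g, β ^ #R * #(admissibleSets s T (E.erase g \ R)) ≤
      (#(admissibleSets s T (E.erase g)) : ℝ))
    {𝒞 : Finset (Finset G)}
    (h𝒞 : ∀ u ∈ 𝒞, u.erase g ∈ admissibleSets s T (E.erase g))
    {i : ι} {h : G} (hdisj : ∀ t ∈ T i, s i * t ∉ T i) (hgc : g ∈ testCells s T i h)
    (hc : testCells s T i h ⊆ E) :
    (#(𝒞.filter (PeriodicOn s T · i h)) : ℝ) ≤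
      #(admissibleSets s T (E.erase g)) / β ^ (#(T i) - 1) := by
  obtain ⟨R, hRc, hgR, hRcard, hpartner⟩ := exists_half_testCells hdisj hgc
  have hmaps : ∀ u ∈ 𝒞.filter (PeriodicOn s T · i h),
      u \ R ∈ admissibleSets s T (E.erase g \ R.erase g) := by
    intro u hu
    have hsdiff : u.erase g \ R.erase g = u \ R := by
      ext a; by_cases hag : a = g <;> simp [hag, hgR]
    exact hsdiff ▸ sdiff_mem_admissibleSets (h𝒞 u (mem_filter.1 hu).1) (R.erase g)
  have hinj : Set.InjOn (· \ R) (𝒞.filter (PeriodicOn s T · i h) : Set (Finset G)) :=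
    injOn_sdiff_of_forall_exists_iff fun a ha =>
      let ⟨b, hb, hab⟩ := hpartner a ha
      ⟨b, hb, fun u hu => hab u (mem_filter.1 hu).2⟩
  have hR := hrem (R.erase g) (erase_subset_erase g (hRc.trans hc))
  rw [card_erase_of_mem hgR, hRcard] at hR
  have hcard := card_le_card_of_injOn _ hmaps hinj
  rw [le_div_iff₀ (pow_pos hβ _), mul_comm]
  refine le_trans ?_ hR
  gcongr

theorem exists_periodicOn_of_notMem_admissibleSets {E u : Finset G} {g : G} (huE : u ⊆ E)
    (hu : u.erase g ∈ admissibleSets s T (E.erase g)) (hbad : u ∉ admissibleSets s T E) :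
    ∃ i h, g ∈ testCells s T i h ∧ testCells s T i h ⊆ E ∧ PeriodicOn s T u i h := by
  simp only [mem_admissibleSets, huE, true_and, not_forall, not_not] at hbad
  obtain ⟨i, h, hc, hper⟩ := hbad
  refine ⟨i, h, ?_, hc, hper⟩
  by_contra hg
  have hc' : testCells s T i h ⊆ E.erase g := fun a ha =>
    mem_erase.2 ⟨fun hag => hg (hag ▸ ha), hc ha⟩
  refine (mem_admissibleSets.1 hu).2 i h hc' ((periodicOn_congr hc' ?_).2 hper)
  rw [erase_inter_comm, erase_idem]

theorem IsSparseTestFamily.card_sdiff_admissibleSets_le {β : ℝ} (hST : IsSparseTestFamily s T β)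
    {E : Finset G} {g : G}
    (hrem : ∀ R ⊆ E.erase g, β ^ #R * #(admissibleSets s T (E.erase g \ R)) ≤
      (#(admissibleSets s T (E.erase g)) : ℝ))
    {𝒞 : Finset (Finset G)}
    (h𝒞 : ∀ u ∈ 𝒞, u ⊆ E ∧ u.erase g ∈ admissibleSets s T (E.erase g)) :
    (#(𝒞 \ admissibleSets s T E) : ℝ) ≤ (2 - β) * #(admissibleSets s T (E.erase g)) := by
  have hβ := hST.pos
  set N : ℝ := (#(admissibleSets s T (E.erase g)) : ℝ)
  have hwit : ∀ u ∈ 𝒞 \ admissibleSets s T E, ∃ i h, g ∈ testCells s T i h ∧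
      testCells s T i h ⊆ E ∧ PeriodicOn s T u i h := fun u hu =>
    have ⟨hu𝒞, hbad⟩ := mem_sdiff.1 hu
    exists_periodicOn_of_notMem_admissibleSets (h𝒞 u hu𝒞).1 (h𝒞 u hu𝒞).2 hbad
  choose I H hIH using hwit
  set K := (𝒞 \ admissibleSets s T E).attach.image fun u => I u.1 u.2
  set tests : ι → Finset G := fun i => ((testSupport s T i).image (g * ·⁻¹)).filter
    fun h => g ∈ testCells s T i h ∧ testCells s T i h ⊆ E
  have hcover : 𝒞 \ admissibleSets s T E ⊆
      K.biUnion fun i => (tests i).biUnion fun h => 𝒞.filter (PeriodicOn s T · i h) := by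
    intro u hu
    obtain ⟨hg, hc, hper⟩ := hIH u hu
    simp only [mem_biUnion]
    exact ⟨I u hu, mem_image.2 ⟨⟨u, hu⟩, mem_attach _ _, rfl⟩, H u hu,
      mem_filter.2 ⟨mem_image_of_mem_testCells hg, hg, hc⟩,
      mem_filter.2 ⟨(mem_sdiff.1 hu).1, hper⟩⟩
  have htests : ∀ i, (#(tests i) : ℝ) ≤ 2 * #(T i) := fun i => by
    exact_mod_cast (card_filter_le _ _).trans (card_image_le.trans (card_testSupport_le s T i))
  calc (#(𝒞 \ admissibleSets s T E) : ℝ)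
      ≤ ∑ i ∈ K, ∑ h ∈ tests i, (#(𝒞.filter (PeriodicOn s T · i h)) : ℝ) := by
        exact_mod_cast (card_le_card hcover).trans
          (card_biUnion_le.trans (sum_le_sum fun i _ => card_biUnion_le))
    _ ≤ ∑ i ∈ K, ∑ h ∈ tests i, N / β ^ (#(T i) - 1) := by
        gcongr with i _ h hh
        exact card_filter_periodicOn_le hβ hrem (fun u hu => (h𝒞 u hu).2) (hST.disjoint i)
          (mem_filter.1 hh).2.1 (mem_filter.1 hh).2.2
    _ ≤ ∑ i ∈ K, 2 * (#(T i) : ℝ) / β ^ (#(T i) - 1) * N := by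
        gcongr with i
        rw [sum_const, nsmul_eq_mul, div_mul_eq_mul_div, mul_div_assoc]
        gcongr
        exact htests i
    _ ≤ (2 - β) * N := by rw [← sum_mul]; gcongr; exact hST.sum_le K

theorem IsSparseTestFamily.mul_card_erase_le {β : ℝ} (hST : IsSparseTestFamily s T β)
    {E : Finset G} {g : G} (hg : g ∈ E)
    (hrem : ∀ R ⊆ E.erase g, β ^ #R * #(admissibleSets s T (E.erase g \ R)) ≤
      (#(admissibleSets s T (E.erase g)) : ℝ)) :
    β * #(admissibleSets s T (E.erase g)) ≤ #(admissibleSets s T E) := by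
  set A' := admissibleSets s T (E.erase g)
  have hA'E : ∀ v ∈ A', v ⊆ E := fun v hv =>
    (mem_admissibleSets.1 hv).1.trans (erase_subset g E)
  have hgA' : ∀ v ∈ A', g ∉ v := fun v hv hgv =>
    notMem_erase g E ((mem_admissibleSets.1 hv).1 hgv)
  have h𝒞 : ∀ u ∈ A' ∪ A'.image (insert g), u ⊆ E ∧ u.erase g ∈ A' := by
    intro u hu
    rcases mem_union.1 hu with hu | hu
    · exact ⟨hA'E u hu, by rwa [erase_eq_of_notMem (hgA' u hu)]⟩
    · obtain ⟨v, hv, rfl⟩ := mem_image.1 hu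
      exact ⟨insert_subset hg (hA'E v hv), by rwa [erase_insert (hgA' v hv)]⟩
  have hsub : admissibleSets s T E ⊆ A' ∪ A'.image (insert g) := by
    intro u hu
    have hu' : u.erase g ∈ A' := by
      have := inter_mem_admissibleSets hu (erase_subset g E)
      rwa [inter_erase, inter_eq_left.2 (mem_admissibleSets.1 hu).1] at this
    by_cases hgu : g ∈ u
    · exact mem_union_right _ (mem_image.2 ⟨_, hu', insert_erase hgu⟩)
    · exact mem_union_left _ (by rwa [erase_eq_of_notMem hgu] at hu')
  have hcard : (#((A' ∪ A'.image (insert g)) \ admissibleSets s T E) : ℝ) +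
      #(admissibleSets s T E) = 2 * #A' := by
    exact_mod_cast (card_sdiff_add_card_eq_card hsub).trans (card_union_image_insert hgA')
  linarith [hST.card_sdiff_admissibleSets_le hrem h𝒞]

theorem IsSparseTestFamily.mul_card_admissibleSets_erase_le {β : ℝ}
    (hST : IsSparseTestFamily s T β) (E : Finset G) :
    ∀ g ∈ E, β * #(admissibleSets s T (E.erase g)) ≤ (#(admissibleSets s T E) : ℝ) := by
  induction E using Finset.strongInduction with
  | H E ih =>
    intro g hg
    exact hST.mul_card_erase_le hg fun R hR =>
      pow_card_mul_sdiff_le_of_forall_erase (f := fun E => (#(admissibleSets s T E) : ℝ))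
        hST.pos.le (fun E' hE' => ih E' (hE'.trans_ssubset (erase_ssubset hg))) hR

theorem IsSparseTestFamily.pow_card_mul_sdiff_le {β : ℝ} (hST : IsSparseTestFamily s T β)
    {E R : Finset G} (hR : R ⊆ E) :
    β ^ #R * #(admissibleSets s T (E \ R)) ≤ (#(admissibleSets s T E) : ℝ) :=
  pow_card_mul_sdiff_le_of_forall_erase (f := fun E => (#(admissibleSets s T E) : ℝ))
    hST.pos.le (fun E' _ => hST.mul_card_admissibleSets_erase_le E') hR

theorem IsSparseTestFamily.pow_card_le_card_admissibleSets {β : ℝ}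
    (hST : IsSparseTestFamily s T β) (hT : ∀ i, (T i).Nonempty) (E : Finset G) :
    β ^ #E ≤ (#(admissibleSets s T E) : ℝ) := by
  simpa [admissibleSets_empty hT] using hST.pow_card_mul_sdiff_le (subset_refl E)

theorem IsSparseTestFamily.pow_card_le_card_image_inter {β : ℝ}
    (hST : IsSparseTestFamily s T β) (hT : ∀ i, (T i).Nonempty) {S E : Finset G} (hS : S ⊆ E) :
    β ^ #S ≤ (#((admissibleSets s T E).image (· ∩ S)) : ℝ) := by
  have hsplit : #(admissibleSets s T E) ≤
      #((admissibleSets s T E).image (· ∩ S)) * #(admissibleSets s T (E \ S)) := by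
    rw [← card_product]
    refine card_le_card_of_injOn (fun u => (u ∩ S, u \ S))
      (fun u hu => mem_product.2 ⟨mem_image_of_mem _ hu, sdiff_mem_admissibleSets hu S⟩) ?_
    intro u _ v _ huv
    simp only [Prod.mk.injEq] at huv
    rw [← sdiff_union_inter u S, ← sdiff_union_inter v S, huv.1, huv.2]
  have hpos : (0 : ℝ) < #(admissibleSets s T (E \ S)) :=
    (pow_pos hST.pos _).trans_le (hST.pow_card_le_card_admissibleSets hT _)
  refine le_of_mul_le_mul_right ?_ hpos
  calc β ^ #S * #(admissibleSets s T (E \ S)) ≤ (#(admissibleSets s T E) : ℝ) :=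
        hST.pow_card_mul_sdiff_le hS
    _ ≤ _ := by exact_mod_cast hsplit

end Counting

theorem isClosed_setOf_filter_mem {α : Type*} (E : Finset α) (𝒜 : Set (Finset α)) :
    IsClosed {x : α → Bool | E.filter (x · = true) ∈ 𝒜} := by
  let r : (α → Bool) → (E → Bool) := fun x a => x a
  have hr : Continuous r := continuous_pi fun a => continuous_apply _
  convert (isClosed_discrete (r '' {x | E.filter (x · = true) ∈ 𝒜})).preimage hr using 1
  refine Set.Subset.antisymm (fun y hy => ⟨y, hy, rfl⟩) ?_
  rintro y ⟨x, hx, hxy⟩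
  have hfilter : E.filter (y · = true) = E.filter (x · = true) :=
    filter_congr fun a ha => by rw [show y a = x a from (congrFun hxy ⟨a, ha⟩).symm]
  show E.filter (y · = true) ∈ 𝒜
  rwa [hfilter]

section Compactness

variable {ι G : Type*} [Group G] {s : ι → G} {T : ι → Finset G}

theorem exists_mem_shiftSpace_of_forall_mem_image {S q : Finset G}
    (hq : ∀ E, S ⊆ E → q ∈ (admissibleSets s T E).image (· ∩ S)) :
    ∃ x ∈ shiftSpace (periodForbidden s T), ∀ a ∈ S, (x a = true ↔ a ∈ q) := by
  let Z : {E : Finset G // S ⊆ E} → Set (G → Bool) := fun E =>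
    {x | E.1.filter (x · = true) ∈ (admissibleSets s T E.1).filter (· ∩ S = q)}
  have hmono : ∀ E E' : {E : Finset G // S ⊆ E}, E.1 ⊆ E'.1 → Z E' ⊆ Z E := by
    intro E E' hEE' x hx
    obtain ⟨hadm, hxq⟩ := mem_filter.1 hx
    have hrestr : E'.1.filter (x · = true) ∩ E.1 = E.1.filter (x · = true) := by
      rw [filter_inter, inter_eq_right.2 hEE']
    refine mem_filter.2 ⟨hrestr ▸ inter_mem_admissibleSets hadm hEE', ?_⟩
    rw [← hrestr, inter_assoc, inter_eq_right.2 E.2, hxq]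
  have hdir : Directed (· ⊇ ·) Z := fun E₁ E₂ =>
    ⟨⟨E₁.1 ∪ E₂.1, E₁.2.trans subset_union_left⟩, hmono _ _ subset_union_left,
      hmono _ _ subset_union_right⟩
  have hne : ∀ E, (Z E).Nonempty := fun E => by
    obtain ⟨u, hu, hus⟩ := mem_image.1 (hq E.1 E.2)
    have hfilter : E.1.filter (fun a => decide (a ∈ u) = true) = u := by
      simpa [filter_mem_eq_inter] using (mem_admissibleSets.1 hu).1
    refine ⟨(· ∈ u), ?_⟩
    show E.1.filter (fun a => decide (a ∈ u) = true) ∈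
      (admissibleSets s T E.1).filter (· ∩ S = q)
    rw [hfilter]
    exact mem_filter.2 ⟨hu, hus⟩
  have hcl : ∀ E, IsClosed (Z E) := fun E => isClosed_setOf_filter_mem _ _
  obtain ⟨x, hx⟩ := IsCompact.nonempty_iInter_of_directed_nonempty_isCompact_isClosed
    (hι := ⟨⟨S, subset_rfl⟩⟩) Z hdir hne (fun E => (hcl E).isCompact) hcl
  have hxE : ∀ E, S ⊆ E → E.filter (x · = true) ∈ admissibleSets s T E ∧
      E.filter (x · = true) ∩ S = q := fun E hE => mem_filter.1 (Set.mem_iInter.1 hx ⟨E, hE⟩)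
  refine ⟨x, (mem_shiftSpace_periodForbidden s T).2 fun i h => ?_, fun a ha => ?_⟩
  · have hc : testCells s T i h ⊆ S ∪ testCells s T i h := subset_union_right
    have hbreak := (mem_admissibleSets.1 (hxE _ subset_union_left).1).2 i h hc
    simp only [PeriodicOn, not_forall] at hbreak
    obtain ⟨t, ht, hne⟩ := hbreak
    refine ⟨t, ht, fun heq => hne ?_⟩
    simp [hc (mul_mem_testCells ht h), hc (mul_mul_mem_testCells ht h), heq]
  · rw [← (hxE S subset_rfl).2]
    simp [ha]

theorem IsSparseTestFamily.pow_card_le_ncard_globallyAdmissible {β : ℝ}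
    (hST : IsSparseTestFamily s T β) (hT : ∀ i, (T i).Nonempty) (S : Finset G) :
    β ^ #S ≤ (globallyAdmissible (periodForbidden s T) S).ncard := by
  let Q : Finset G → Finset (Finset G) := fun E => (admissibleSets s T (E ∪ S)).image (· ∩ S)
  have hanti : ∀ E E', E ⊆ E' → Q E' ⊆ Q E := by
    intro E E' hEE' q hq
    obtain ⟨u, hu, rfl⟩ := mem_image.1 hq
    refine mem_image.2
      ⟨u ∩ (E ∪ S), inter_mem_admissibleSets hu (union_subset_union hEE' le_rfl), ?_⟩
    rw [inter_assoc, inter_eq_right.2 subset_union_right]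
  -- a minimal `Q E`, by cardinality, is contained in all the others
  set E₀ := Function.argmin fun E => #(Q E)
  have hE₀ : ∀ E, Q E₀ ⊆ Q E := fun E => by
    rw [← eq_of_subset_of_card_le (hanti E₀ (E₀ ∪ E) subset_union_left)
      (Function.argmin_le (fun E => #(Q E)) _)]
    exact hanti E (E₀ ∪ E) subset_union_right
  have hext : ∀ q ∈ Q E₀,
      ∃ x ∈ shiftSpace (periodForbidden s T), ∀ a ∈ S, (x a = true ↔ a ∈ q) :=
    fun q hq => exists_mem_shiftSpace_of_forall_mem_image fun E hE =>
      union_eq_left.2 hE ▸ hE₀ E hq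
  have hQS : ∀ q ∈ Q E₀, q ⊆ S := fun q hq => by
    obtain ⟨u, -, rfl⟩ := mem_image.1 hq
    exact inter_subset_right
  have hcard : #(Q E₀) ≤ (globallyAdmissible (periodForbidden s T) S).ncard := by
    rw [← Set.ncard_coe_finset]
    refine Set.ncard_le_ncard_of_injOn (fun q a => decide (a.1 ∈ q)) (fun q hq => ?_)
      (fun q hq q' hq' hqq' => ?_) (Set.toFinite _)
    · obtain ⟨x, hx, hxq⟩ := hext q hq
      refine ⟨x, hx, 1, fun a => ?_⟩
      rw [one_mul, Bool.eq_iff_iff, decide_eq_true_iff]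
      exact hxq a a.2
    · ext a
      by_cases ha : a ∈ S
      · simpa using congrFun hqq' ⟨a, ha⟩
      · exact iff_of_false (fun h => ha (hQS q hq h)) (fun h => ha (hQS q' hq' h))
  calc β ^ #S ≤ #(Q E₀) := hST.pow_card_le_card_image_inter hT subset_union_right
    _ ≤ _ := by exact_mod_cast hcard

end Compactness

theorem exists_finset_card_eq_forall_mul_notMem {G : Type*} [Group G] [Infinite G] {g : G}
    (hg : g ≠ 1) (n : ℕ) : ∃ T : Finset G, #T = n ∧ ∀ t ∈ T, g * t ∉ T := by
  induction n with
  | zero => exact ⟨∅, rfl, by simp⟩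
  | succ n ih =>
    obtain ⟨T, hcard, hT⟩ := ih
    obtain ⟨a, ha⟩ :=
      Infinite.exists_notMem_finset (T ∪ T.image (g * ·) ∪ T.image (g⁻¹ * ·))
    simp only [mem_union, mem_image, not_or, not_exists, not_and] at ha
    obtain ⟨⟨haT, hgT⟩, hginvT⟩ := ha
    refine ⟨insert a T, by rw [card_insert_of_notMem haT, hcard], fun t ht hgt => ?_⟩
    rcases mem_insert.1 ht with rfl | ht <;> rcases mem_insert.1 hgt with hgt | hgt
    · exact hg (mul_eq_right.1 hgt)
    · exact hginvT _ hgt (inv_mul_cancel_left g t)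
    · exact hgT t ht hgt
    · exact hT t ht hgt

theorem exists_pos_two_mul_div_pow_le {β : ℝ} (hβ : 1 < β) {c : ℝ} (hc : 0 < c) :
    ∃ m : ℕ, 0 < m ∧ 2 * (m : ℝ) / β ^ (m - 1) ≤ c := by
  have hβ0 : 0 < β := zero_lt_one.trans hβ
  obtain ⟨m, hm, hm1⟩ := (((tendsto_pow_const_div_const_pow_of_one_lt 1 hβ).eventually
    (gt_mem_nhds (by positivity : 0 < c / (2 * β)))).and (eventually_ge_atTop 1)).exists
  refine ⟨m, hm1, ?_⟩
  have hpow : β ^ m = β ^ (m - 1) * β := by rw [← pow_succ, Nat.sub_add_cancel hm1]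
  rw [pow_one, hpow, lt_div_iff₀ (by positivity)] at hm
  calc 2 * (m : ℝ) / β ^ (m - 1) = m / (β ^ (m - 1) * β) * (2 * β) := by field_simp
    _ ≤ c := hm.le

theorem exists_isSparseTestFamily {G : Type*} [Group G] [Countable G] [Infinite G] {β : ℝ}
    (hβ1 : 1 < β) (hβ2 : β < 2) :
    ∃ T : {g : G // g ≠ 1} → Finset G,
      IsSparseTestFamily Subtype.val T β ∧ ∀ g, (T g).Nonempty := by
  choose C hC0 hC using fun n : ℕ =>
    exists_pos_two_mul_div_pow_le hβ1 <|
      mul_pos (half_pos (sub_pos.2 hβ2)) (pow_pos (one_half_pos (α := ℝ)) n)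
  obtain ⟨f, hf⟩ := Countable.exists_injective_nat {g : G // g ≠ 1}
  choose T hTcard hTdisj using fun g : {g : G // g ≠ 1} =>
    exists_finset_card_eq_forall_mul_notMem g.2 (C (f g))
  refine ⟨T, ⟨by linarith, hTdisj, fun K => ?_⟩, fun g => card_pos.1 (hTcard g ▸ hC0 _)⟩
  calc ∑ g ∈ K, 2 * (#(T g) : ℝ) / β ^ (#(T g) - 1)
      = ∑ n ∈ K.image f, 2 * (C n : ℝ) / β ^ (C n - 1) := by
        rw [sum_image hf.injOn]; simp only [hTcard]
    _ ≤ ∑ n ∈ K.image f, (2 - β) / 2 * (1 / 2) ^ n := sum_le_sum fun n _ => hC n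
    _ = (2 - β) / 2 * ∑ n ∈ K.image f, (1 / 2 : ℝ) ^ n := (mul_sum _ _ _).symm
    _ ≤ (2 - β) / 2 * 2 := by
        gcongr
        exact (summable_geometric_two.sum_le_tsum _ fun _ _ => by positivity).trans_eq
          tsum_geometric_two
    _ = 2 - β := by ring

/-- Over any infinite countable group there is a strongly aperiodic subshift on the
alphabet `{0,1}` whose growth is at least `2 - ε`. -/
theorem exists_strongly_aperiodic_large_growth {G : Type*} [Group G] [Countable G] [Infinite G]
    (ε : ℝ) (hε : 0 < ε) :
    ∃ F : Set (Pattern G Bool),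
      (∀ x ∈ shiftSpace F, ∀ g : G, g ≠ 1 → ∃ h : G, x (g * h) ≠ x h) ∧
      ∃ α : ℝ, Filter.Tendsto (fun n : ℕ => (globalComplexity F n : ℝ) ^ ((1 : ℝ) / n))
          Filter.atTop (nhds α) ∧ 2 - ε ≤ α := by
  obtain ⟨β, hβ1, hβ2, hβε⟩ : ∃ β : ℝ, 1 < β ∧ β < 2 ∧ 2 - ε ≤ β :=
    ⟨max (2 - ε) (3 / 2), lt_max_of_lt_right (by norm_num), max_lt (by linarith) (by norm_num),
      le_max_left _ _⟩
  obtain ⟨T, hST, hT⟩ := exists_isSparseTestFamily (G := G) hβ1 hβ2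
  refine ⟨periodForbidden Subtype.val T, fun x hx g hg => ?_, ?_⟩
  · obtain ⟨t, -, ht⟩ := (mem_shiftSpace_periodForbidden _ _).1 hx ⟨g, hg⟩ 1
    exact ⟨t, by simpa using ht⟩
  · obtain ⟨α, hα, hβα⟩ := exists_tendsto_rpow_one_div_of_submultiplicative hST.pos
      (pow_le_globalComplexity (hST.pow_card_le_ncard_globallyAdmissible hT))
      (fun m n => by exact_mod_cast globalComplexity_add_le _ m n)
    exact ⟨α, hα, hβε.trans hβα⟩
end

section
/- Let G be a group generated by a finite set S with |S| ≥ 2. Then the undirected right Cayley graph of G with respect to S admits a nonrepetitive vertex coloring with 4|S|² + 16|S|^{5/3} colors. -/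
/-!
Rosenfeld's counting argument. For a finite vertex set `U` let `C(U)` be the number of colorings
of `U` with no repetitively colored path inside `U`; we show `C(U ∪ {x}) ≥ β C(U)` by induction
on `|U|`. Of the `|A| C(U)` extensions to `x` of the good colorings of `U`, a bad one repeats
along a path on `2n` vertices through `x`, with `x` in the first half after reversing the path.
There are at most `n (2|S|)^(2n-1)` such paths, since a path is fixed by the position of `x` and
its steps in `S ∪ S⁻¹`; for each of them the coloring is determined by its restriction to `U`
minus the first half, so by induction at most `C(U) / β^(n-1)` extensions repeat along it. The
resulting series is at most `4|S|^(5/3)` for `β = 4|S|² + 12|S|^(5/3)`. Thus every finite `U`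
has a good coloring, and compactness gives one of the whole Cayley graph.
-/

open Finset

theorem exists_forall_of_forall_finset {V α : Type*} [Finite α]
    {P : Finset V → (V → α) → Prop} (hmono : ∀ {U U' c}, U ⊆ U' → P U' c → P U c)
    (hloc : ∀ {U c c'}, (∀ v ∈ U, c v = c' v) → P U c → P U c')
    (h : ∀ U, ∃ c, P U c) : ∃ c, ∀ U, P U c := by
  choose c hc using h
  let 𝒰 : Ultrafilter (Finset V) := .of Filter.atTop
  have hlim (v : V) : ∃ a, ∀ᶠ U in 𝒰, c U v = a := by
    obtain ⟨a, ha⟩ := Ultrafilter.eq_pure_of_finite (𝒰.map fun U ↦ c U v)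
    exact ⟨a, Ultrafilter.mem_map.1 (ha ▸ rfl : {a} ∈ 𝒰.map fun U ↦ c U v)⟩
  choose climit hclimit using hlim
  refine ⟨climit, fun U₀ ↦ ?_⟩
  have hsup : ∀ᶠ U in 𝒰, U₀ ⊆ U := Ultrafilter.of_le _ (Filter.eventually_ge_atTop U₀)
  obtain ⟨U, hU₀, hU⟩ :=
    (hsup.and ((Filter.eventually_all_finset U₀).2 fun v _ ↦ hclimit v)).exists
  exact hloc hU (hmono hU₀ (hc U))

theorem pow_card_mul_sdiff_le {V : Type*} [DecidableEq V] {f : Finset V → ℝ} {β : ℝ}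
    (hβ : 0 ≤ β) {U : Finset V}
    (hf : ∀ U₀ ⊂ U, ∀ x ∈ U, x ∉ U₀ → β * f U₀ ≤ f (insert x U₀))
    {W : Finset V} (hW : W ⊆ U) : β ^ #W * f (U \ W) ≤ f U := by
  induction W using Finset.induction_on with
  | empty => simp
  | insert w W hw ih =>
    have hwU := hW (mem_insert_self w W)
    have hins : insert w (U \ insert w W) = U \ W := by
      ext y
      by_cases hy : y = w <;> simp [hy, hwU, hw]
    calc β ^ #(insert w W) * f (U \ insert w W)
        = β ^ #W * (β * f (U \ insert w W)) := by rw [card_insert_of_notMem hw, pow_succ]; ring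
      _ ≤ β ^ #W * f (U \ W) := by
        gcongr
        rw [← hins]
        exact hf _ (sdiff_ssubset hW (insert_nonempty w W)) w hwU (by simp)
      _ ≤ f U := ih ((subset_insert w W).trans hW)

lemma sum_Icc_mul_pow_div_pow_le {D β : ℝ} (hD : 0 ≤ D) (hDβ : D ^ 2 < β) (M : ℕ) :
    ∑ n ∈ Icc 1 M, n * D ^ (2 * n - 1) / β ^ (n - 1) ≤ D / (1 - D ^ 2 / β) ^ 2 := by
  have hβ : 0 < β := (sq_nonneg D).trans_lt hDβ
  set q := D ^ 2 / β with hq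
  have hq0 : 0 ≤ q := by positivity
  have hsum := hasSum_choose_mul_geometric_of_norm_lt_one (𝕜 := ℝ) 1
    (by rwa [Real.norm_of_nonneg hq0, hq, div_lt_one hβ] : ‖q‖ < 1)
  rw [← Ico_add_one_right_eq_Icc, sum_Ico_eq_sum_range, add_tsub_cancel_right]
  calc ∑ k ∈ range M, ((1 + k : ℕ) : ℝ) * D ^ (2 * (1 + k) - 1) / β ^ (1 + k - 1)
      = D * ∑ k ∈ range M, ((k + 1).choose 1 : ℝ) * q ^ k := by
        rw [mul_sum]
        refine sum_congr rfl fun k _ ↦ ?_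
        rw [show 2 * (1 + k) - 1 = 2 * k + 1 by omega, show 1 + k - 1 = k by omega,
          Nat.choose_one_right, hq, div_pow, pow_succ, pow_mul]
        push_cast
        field_simp
        ring
    _ ≤ D * (1 / (1 - q) ^ (1 + 1)) := by
        gcongr
        exact sum_le_hasSum _ (fun _ _ ↦ by positivity) hsum
    _ = D / (1 - q) ^ 2 := by ring

namespace SimpleGraph

open scoped Classical Pointwise

variable {V α : Type*} (G : SimpleGraph V)

structure IsPathSeq (m : ℕ) (v : ℕ → V) : Prop where
  injOn : Set.InjOn v (Set.Iio m)
  adj : ∀ i, i + 1 < m → G.Adj (v i) (v (i + 1))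

def IsRepetition (c : V → α) (n : ℕ) (v : ℕ → V) : Prop :=
  0 < n ∧ G.IsPathSeq (2 * n) v ∧ ∀ i < n, c (v i) = c (v (n + i))

def NonrepetitiveOn (c : V → α) (U : Finset V) : Prop :=
  ∀ n v, G.IsRepetition c n v → ∃ i < 2 * n, v i ∉ U

def PathsBoundedBy (D : ℕ) : Prop :=
  ∀ (x : V) (m k : ℕ), ∃ P : Finset (ℕ → V), #P ≤ D ^ (m - 1) ∧
    ∀ v, G.IsPathSeq m v → k < m → v k = x → ∃ p ∈ P, Set.EqOn p v (Set.Iio m)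

variable {G} {m n : ℕ} {v w : ℕ → V} {c c' : V → α} {U U' : Finset V}

lemma IsPathSeq.congr (h : Set.EqOn v w (Set.Iio m)) (hv : G.IsPathSeq m v) :
    G.IsPathSeq m w where
  injOn := hv.injOn.congr h
  adj i hi := by
    rw [← h (Set.mem_Iio.2 (by omega : i < m)), ← h (Set.mem_Iio.2 hi)]
    exact hv.adj i hi

lemma IsPathSeq.reverse (hv : G.IsPathSeq m v) : G.IsPathSeq m fun j ↦ v (m - 1 - j) where
  injOn i hi j hj h := by
    simp only [Set.mem_Iio] at hi hj
    have := hv.injOn (Set.mem_Iio.2 (by omega : m - 1 - i < m))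
      (Set.mem_Iio.2 (by omega : m - 1 - j < m)) h
    omega
  adj i hi := by
    have := (hv.adj (m - 1 - (i + 1)) (by omega)).symm
    rwa [show m - 1 - (i + 1) + 1 = m - 1 - i by omega] at this

lemma IsRepetition.congr (h : Set.EqOn v w (Set.Iio (2 * n))) (hv : G.IsRepetition c n v) :
    G.IsRepetition c n w := by
  obtain ⟨hn, hpath, hcol⟩ := hv
  refine ⟨hn, hpath.congr h, fun i hi ↦ ?_⟩
  rw [← h (Set.mem_Iio.2 (by omega : i < 2 * n)),
    ← h (Set.mem_Iio.2 (by omega : n + i < 2 * n))]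
  exact hcol i hi

lemma IsRepetition.reverse (hv : G.IsRepetition c n v) :
    G.IsRepetition c n fun j ↦ v (2 * n - 1 - j) := by
  obtain ⟨hn, hpath, hcol⟩ := hv
  refine ⟨hn, hpath.reverse, fun i hi ↦ ?_⟩
  dsimp only
  rw [show 2 * n - 1 - i = n + (n - 1 - i) by omega, show 2 * n - 1 - (n + i) = n - 1 - i by omega]
  exact (hcol _ (by omega)).symm

lemma NonrepetitiveOn.mono (h : U' ⊆ U) (hc : G.NonrepetitiveOn c U) : G.NonrepetitiveOn c U' :=
  fun n v hv ↦ (hc n v hv).imp fun _ ⟨hi, hvi⟩ ↦ ⟨hi, fun h' ↦ hvi (h h')⟩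

lemma NonrepetitiveOn.congr (h : ∀ v ∈ U, c v = c' v) (hc : G.NonrepetitiveOn c U) :
    G.NonrepetitiveOn c' U := by
  intro n v ⟨hn, hpath, hcol⟩
  by_contra! hU
  have hrep : G.IsRepetition c n v := ⟨hn, hpath, fun i hi ↦ by
    rw [h _ (hU i (by omega)), h _ (hU (n + i) (by omega))]
    exact hcol i hi⟩
  obtain ⟨i, hi, hvi⟩ := hc n v hrep
  exact hvi (hU i hi)

lemma nonrepetitiveOn_empty : G.NonrepetitiveOn c ∅ :=
  fun _ _ ⟨hn, _⟩ ↦ ⟨0, by omega, notMem_empty _⟩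

lemma card_inter_image_range {x : V} {n k : ℕ} {p : ℕ → V} (hx : x ∉ U) (hk : k < n)
    (hp : Set.InjOn p (Set.Iio n)) (hpU : ∀ i < n, p i ∈ insert x U) (hpx : p k = x) :
    #(U ∩ (range n).image p) = n - 1 := by
  have hUp : U ∩ (range n).image p = ((range n).image p).erase x := by
    ext y
    simp only [mem_inter, mem_erase, mem_image, mem_range]
    constructor
    · rintro ⟨hy, hyp⟩
      exact ⟨ne_of_mem_of_not_mem hy hx, hyp⟩
    · rintro ⟨hyx, i, hi, rfl⟩
      exact ⟨(mem_insert.1 (hpU i hi)).resolve_left hyx, i, hi, rfl⟩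
  rw [hUp, card_erase_of_mem (hpx ▸ mem_image_of_mem p (mem_range.2 hk)),
    card_image_of_injOn (by simpa using hp), card_range]

lemma exists_repetition_through_of_not_nonrepetitiveOn_insert {x : V}
    (hc : G.NonrepetitiveOn c U) (hc' : ¬ G.NonrepetitiveOn c (insert x U)) :
    ∃ n ∈ Icc 1 (#U + 1), ∃ k < n, ∃ v, G.IsRepetition c n v ∧
      (∀ i < 2 * n, v i ∈ insert x U) ∧ v k = x := by
  simp only [NonrepetitiveOn, not_forall, not_exists, not_and, not_not] at hc'
  obtain ⟨n, v, hrep, hvU⟩ := hc'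
  obtain ⟨j, hj, hvj⟩ := hc n v hrep
  have hvjx : v j = x := (mem_insert.1 (hvU j hj)).resolve_right hvj
  have hnU : n ∈ Icc 1 (#U + 1) := by
    have := card_le_card_of_injOn v (fun i hi ↦ hvU i (mem_range.1 hi))
      (by simpa using hrep.2.1.injOn)
    have := card_insert_le x U
    simp only [card_range] at *
    exact mem_Icc.2 ⟨hrep.1, by omega⟩
  rcases lt_or_ge j n with hjn | hjn
  · exact ⟨n, hnU, j, hjn, v, hrep, hvU, hvjx⟩
  · refine ⟨n, hnU, 2 * n - 1 - j, by omega, _, hrep.reverse,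
      fun i hi ↦ hvU _ (by omega), ?_⟩
    rwa [show 2 * n - 1 - (2 * n - 1 - j) = j by omega]

section Counting

variable [Fintype α] [Inhabited α]

variable (α) in
/-- Colorings are normalized to `default` outside `U`, so the colorings of `U` form a finite set
of total functions. -/
noncomputable def supportedColorings (U : Finset V) : Finset (V → α) :=
  univ.image fun (f : U → α) v ↦ if h : v ∈ U then f ⟨v, h⟩ else default

lemma mem_supportedColorings : c ∈ supportedColorings α U ↔ ∀ v ∉ U, c v = default := by
  simp only [supportedColorings, mem_image, mem_univ, true_and]
  constructor
  · rintro ⟨f, rfl⟩ v hv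
    simp [hv]
  · exact fun h ↦ ⟨fun u ↦ c u, funext fun v ↦ by by_cases hv : v ∈ U <;> simp [hv, h]⟩

variable (G α) in
noncomputable def goodColorings (U : Finset V) : Finset (V → α) :=
  {c ∈ supportedColorings α U | G.NonrepetitiveOn c U}

lemma mem_goodColorings :
    c ∈ G.goodColorings α U ↔ (∀ v ∉ U, c v = default) ∧ G.NonrepetitiveOn c U := by
  rw [goodColorings, mem_filter, mem_supportedColorings]

lemma card_goodColorings_empty : #(G.goodColorings α ∅) = 1 :=
  card_eq_one.2 ⟨fun _ ↦ default, eq_singleton_iff_unique_mem.2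
    ⟨mem_goodColorings.2 ⟨fun _ _ ↦ rfl, nonrepetitiveOn_empty⟩,
      fun _ hc ↦ funext fun v ↦ (mem_goodColorings.1 hc).1 v (notMem_empty v)⟩⟩

lemma card_mul_card_goodColorings_le {x : V} (hx : x ∉ U) :
    Fintype.card α * #(G.goodColorings α U) ≤
      #{c ∈ supportedColorings α (insert x U) | G.NonrepetitiveOn c U} := by
  rw [mul_comm, ← card_univ, ← card_product]
  refine card_le_card_of_injOn (fun ca ↦ Function.update ca.1 x ca.2) ?_ ?_
  · rintro ⟨c, a⟩ hca
    obtain ⟨hsupp, hc⟩ := mem_goodColorings.1 (mem_product.1 hca).1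
    refine mem_filter.2 ⟨mem_supportedColorings.2 fun v hv ↦ ?_, hc.congr fun v hv ↦ ?_⟩
    · dsimp only
      rw [Function.update_of_ne (ne_of_mem_of_not_mem (mem_insert_self x U) hv).symm]
      exact hsupp v fun h ↦ hv (mem_insert_of_mem h)
    · exact (Function.update_of_ne (ne_of_mem_of_not_mem hv hx) _ _).symm
  · rintro ⟨c₁, a₁⟩ h₁ ⟨c₂, a₂⟩ h₂ h
    have hx₁ := (mem_goodColorings.1 (mem_product.1 h₁).1).1 x hx
    have hx₂ := (mem_goodColorings.1 (mem_product.1 h₂).1).1 x hx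
    have ha : a₁ = a₂ := by simpa using congrFun h x
    refine Prod.ext (funext fun v ↦ ?_) ha
    by_cases hv : v = x
    · rw [hv, hx₁, hx₂]
    · simpa [hv] using congrFun h v

lemma card_filter_repetition_le {x : V} {n k : ℕ} {p : ℕ → V} (hk : k < n)
    (hp : Set.InjOn p (Set.Iio (2 * n))) (hpx : p k = x) :
    #{c ∈ supportedColorings α (insert x U) |
        G.NonrepetitiveOn c U ∧ ∀ i < n, c (p i) = c (p (n + i))} ≤
      #(G.goodColorings α (U \ (range n).image p)) := by
  set H := (range n).image p
  have hxH : x ∈ H := mem_image.2 ⟨k, mem_range.2 hk, hpx⟩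
  -- Erasing the first half `H` loses nothing: it is a copy of the second half, disjoint from `H`.
  refine card_le_card_of_injOn (fun c y ↦ if y ∈ H then default else c y) ?_ ?_
  · intro c hc
    obtain ⟨hsupp, hc, -⟩ := mem_filter.1 hc
    refine mem_goodColorings.2 ⟨fun y hy ↦ ?_, (hc.mono sdiff_subset).congr fun y hy ↦ ?_⟩
    · dsimp only
      split_ifs with hyH
      · rfl
      refine mem_supportedColorings.1 hsupp y fun hy' ↦ ?_
      rcases mem_insert.1 hy' with rfl | hyU
      · exact hyH hxH
      · exact hy (mem_sdiff.2 ⟨hyU, hyH⟩)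
    · exact (if_neg (mem_sdiff.1 hy).2).symm
  · intro c₁ h₁ c₂ h₂ h
    have hcol₁ := (mem_filter.1 h₁).2.2
    have hcol₂ := (mem_filter.1 h₂).2.2
    funext y
    by_cases hy : y ∈ H
    · obtain ⟨i, hi, rfl⟩ := mem_image.1 hy
      have hi := mem_range.1 hi
      have hfar : p (n + i) ∉ H := by
        simp only [H, mem_image, mem_range, not_exists, not_and]
        intro j hj hpj
        have := hp (Set.mem_Iio.2 (by omega : j < 2 * n)) (Set.mem_Iio.2 (by omega)) hpj
        omega
      rw [hcol₁ i hi, hcol₂ i hi]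
      simpa [hfar] using congrFun h (p (n + i))
    · simpa [hy] using congrFun h y

lemma card_filter_repetition_le_div {β : ℝ} (hβ : 0 < β)
    (hU : ∀ W ⊆ U, β ^ #W * #(G.goodColorings α (U \ W)) ≤ #(G.goodColorings α U))
    {x : V} {n k : ℕ} {p : ℕ → V} (hx : x ∉ U) (hk : k < n) (hp : G.IsPathSeq (2 * n) p)
    (hpU : ∀ i < 2 * n, p i ∈ insert x U) (hpx : p k = x) :
    (#{c ∈ supportedColorings α (insert x U) |
        G.NonrepetitiveOn c U ∧ ∀ i < n, c (p i) = c (p (n + i))} : ℝ) ≤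
      #(G.goodColorings α U) / β ^ (n - 1) := by
  have hW := hU _ (inter_subset_left (s₂ := (range n).image p))
  rw [sdiff_inter_self_left, card_inter_image_range hx hk
    (hp.injOn.mono (Set.Iio_subset_Iio (by omega))) (fun i hi ↦ hpU i (by omega)) hpx] at hW
  rw [le_div_iff₀ (pow_pos hβ _), mul_comm]
  refine le_trans (mul_le_mul_of_nonneg_left ?_ (by positivity)) hW
  exact_mod_cast card_filter_repetition_le hk hp.injOn hpx

theorem card_filter_not_nonrepetitiveOn_insert_le {D : ℕ} (hD : G.PathsBoundedBy D) {β : ℝ}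
    (hβ : 0 < β) {x : V} (hx : x ∉ U)
    (hU : ∀ W ⊆ U, β ^ #W * #(G.goodColorings α (U \ W)) ≤ #(G.goodColorings α U)) :
    (#{c ∈ supportedColorings α (insert x U) |
        G.NonrepetitiveOn c U ∧ ¬ G.NonrepetitiveOn c (insert x U)} : ℝ) ≤
      (∑ n ∈ Icc 1 (#U + 1), n * D ^ (2 * n - 1) / β ^ (n - 1)) * #(G.goodColorings α U) := by
  choose P hPcard hPcover using hD x
  set E := {c ∈ supportedColorings α (insert x U) | G.NonrepetitiveOn c U}
  set Q : ℕ → ℕ → Finset (ℕ → V) := fun n k ↦ {p ∈ P (2 * n) k |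
    G.IsPathSeq (2 * n) p ∧ (∀ i < 2 * n, p i ∈ insert x U) ∧ p k = x}
  set B : ℕ → (ℕ → V) → Finset (V → α) :=
    fun n p ↦ {c ∈ E | ∀ i < n, c (p i) = c (p (n + i))}
  have hbad : {c ∈ E | ¬ G.NonrepetitiveOn c (insert x U)} ⊆
      (Icc 1 (#U + 1)).biUnion fun n ↦ (range n).biUnion fun k ↦ (Q n k).biUnion (B n) := by
    intro c hc
    obtain ⟨hcE, hc'⟩ := mem_filter.1 hc
    obtain ⟨n, hn, k, hk, v, hv, hvU, hvx⟩ :=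
      exists_repetition_through_of_not_nonrepetitiveOn_insert (mem_filter.1 hcE).2 hc'
    obtain ⟨p, hpP, hpv⟩ := hPcover (2 * n) k v hv.2.1 (by omega) hvx
    obtain ⟨-, hp, hcol⟩ := hv.congr hpv.symm
    simp only [mem_biUnion, mem_range, Q, B, mem_filter]
    refine ⟨n, hn, k, hk, p, ⟨hpP, hp, fun i hi ↦ hpv hi ▸ hvU i hi, ?_⟩, hcE, hcol⟩
    exact hpv (Set.mem_Iio.2 (by omega : k < 2 * n)) ▸ hvx
  have hB (n k p) (hk : k ∈ range n) (hp : p ∈ Q n k) :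
      (#(B n p) : ℝ) ≤ #(G.goodColorings α U) / β ^ (n - 1) := by
    obtain ⟨-, hpath, hpU, hpx⟩ := mem_filter.1 hp
    simpa only [B, E, filter_filter] using
      card_filter_repetition_le_div hβ hU hx (mem_range.1 hk) hpath hpU hpx
  have hQ (n k) : (#(Q n k) : ℝ) ≤ D ^ (2 * n - 1) := by
    exact_mod_cast (card_filter_le _ _).trans (hPcard _ _)
  rw [← filter_filter]
  calc (#{c ∈ E | ¬ G.NonrepetitiveOn c (insert x U)} : ℝ)
      ≤ ∑ n ∈ Icc 1 (#U + 1), ∑ k ∈ range n, ∑ p ∈ Q n k, (#(B n p) : ℝ) := by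
        exact_mod_cast (card_le_card hbad).trans <| card_biUnion_le.trans <|
          sum_le_sum fun n _ ↦ card_biUnion_le.trans <| sum_le_sum fun k _ ↦ card_biUnion_le
    _ ≤ ∑ n ∈ Icc 1 (#U + 1), ∑ k ∈ range n,
          (D ^ (2 * n - 1) * (#(G.goodColorings α U) / β ^ (n - 1)) : ℝ) := by
        gcongr with n _ k hk
        refine (sum_le_sum fun p hp ↦ hB n k p hk hp).trans ?_
        rw [sum_const, nsmul_eq_mul]
        gcongr
        exact hQ n k
    _ = _ := by
        simp only [sum_const, card_range, nsmul_eq_mul, sum_mul]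
        refine sum_congr rfl fun n _ ↦ ?_
        ring

theorem card_mul_card_goodColorings_le_add {D : ℕ} (hD : G.PathsBoundedBy D) {β : ℝ}
    (hβ : 0 < β) {x : V} (hx : x ∉ U)
    (hU : ∀ W ⊆ U, β ^ #W * #(G.goodColorings α (U \ W)) ≤ #(G.goodColorings α U)) :
    Fintype.card α * (#(G.goodColorings α U) : ℝ) ≤ #(G.goodColorings α (insert x U)) +
      (∑ n ∈ Icc 1 (#U + 1), n * D ^ (2 * n - 1) / β ^ (n - 1)) * #(G.goodColorings α U) := by
  set E := {c ∈ supportedColorings α (insert x U) | G.NonrepetitiveOn c U}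
  have hgood : {c ∈ E | G.NonrepetitiveOn c (insert x U)} ⊆ G.goodColorings α (insert x U) :=
    fun c hc ↦ mem_goodColorings.2
      ⟨mem_supportedColorings.1 (mem_filter.1 (mem_filter.1 hc).1).1, (mem_filter.1 hc).2⟩
  calc (Fintype.card α * #(G.goodColorings α U) : ℝ)
      ≤ #E := by exact_mod_cast card_mul_card_goodColorings_le hx
    _ = #{c ∈ E | G.NonrepetitiveOn c (insert x U)} +
          #{c ∈ E | ¬ G.NonrepetitiveOn c (insert x U)} := by
        exact_mod_cast (card_filter_add_card_filter_not _).symm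
    _ ≤ _ := by
        gcongr
        simpa only [E, filter_filter] using
          card_filter_not_nonrepetitiveOn_insert_le hD hβ hx hU

theorem pow_card_le_card_goodColorings {D : ℕ} (hD : G.PathsBoundedBy D) {β : ℝ}
    (hDβ : (D : ℝ) ^ 2 < β) (hα : β + D / (1 - D ^ 2 / β) ^ 2 ≤ Fintype.card α)
    (U : Finset V) : β ^ #U ≤ #(G.goodColorings α U) := by
  have hβ : 0 < β := (sq_nonneg _).trans_lt hDβ
  suffices ∀ U : Finset V, ∀ W ⊆ U,
      β ^ #W * #(G.goodColorings α (U \ W)) ≤ #(G.goodColorings α U) by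
    simpa [card_goodColorings_empty] using this U U subset_rfl
  intro U
  induction U using Finset.strongInduction with
  | H U ih =>
    refine fun W hW ↦ pow_card_mul_sdiff_le (f := fun U ↦ (#(G.goodColorings α U) : ℝ))
      hβ.le (fun U₀ hU₀ x _ hx ↦ ?_) hW
    have hsum := sum_Icc_mul_pow_div_pow_le (Nat.cast_nonneg D) hDβ (#U₀ + 1)
    calc β * #(G.goodColorings α U₀)
        ≤ (Fintype.card α - ∑ n ∈ Icc 1 (#U₀ + 1), n * D ^ (2 * n - 1) / β ^ (n - 1)) *
            #(G.goodColorings α U₀) := by gcongr; linarith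
      _ ≤ #(G.goodColorings α (insert x U₀)) := by
        linarith [card_mul_card_goodColorings_le_add hD hβ hx (ih U₀ hU₀)]

end Counting

theorem PathsBoundedBy.exists_nonrepetitiveOn [Fintype α] {D : ℕ} (hD : G.PathsBoundedBy D)
    {β : ℝ} (hDβ : (D : ℝ) ^ 2 < β) (hα : β + D / (1 - D ^ 2 / β) ^ 2 ≤ Fintype.card α)
    (U : Finset V) : ∃ c : V → α, G.NonrepetitiveOn c U := by
  have hβ : 0 < β := (sq_nonneg _).trans_lt hDβ
  have : Nonempty α := Fintype.card_pos_iff.1 <| by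
    have : (0 : ℝ) ≤ D / (1 - D ^ 2 / β) ^ 2 := by positivity
    exact_mod_cast (hβ.trans_le (by linarith) : (0 : ℝ) < Fintype.card α)
  inhabit α
  obtain ⟨c, hc⟩ := card_pos.1 <| by
    exact_mod_cast (pow_pos hβ _).trans_le (pow_card_le_card_goodColorings hD hDβ hα U)
  exact ⟨c, (mem_goodColorings.1 hc).2⟩

theorem PathsBoundedBy.exists_nonrepetitive [Fintype α] {D : ℕ} (hD : G.PathsBoundedBy D)
    {β : ℝ} (hDβ : (D : ℝ) ^ 2 < β)
    (hα : β + D / (1 - D ^ 2 / β) ^ 2 ≤ Fintype.card α) :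
    ∃ c : V → α, ∀ U, G.NonrepetitiveOn c U :=
  exists_forall_of_forall_finset (fun hUU' hc ↦ hc.mono hUU') (fun h hc ↦ hc.congr h)
    (hD.exists_nonrepetitiveOn hDβ hα)

section Cayley

variable {M : Type*} [Group M]

lemma mul_prod_take_ofFn_inv_mul (v : ℕ → M) {m j : ℕ} (hj : j < m) :
    v 0 * ((List.ofFn fun i : Fin (m - 1) ↦ (v i)⁻¹ * v (i + 1 : ℕ)).take j).prod = v j := by
  induction j with
  | zero => simp
  | succ j ih =>
    rw [List.prod_take_succ _ _ (by simp; omega), ← mul_assoc, ih (by omega)]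
    simp

theorem mulCayley_pathsBoundedBy (S : Finset M) :
    (mulCayley (S : Set M)).PathsBoundedBy (2 * #S) := by
  intro x m k
  -- a path is determined by its `k`-th vertex `x` and its steps `(v i)⁻¹ * v (i + 1) ∈ S ∪ S⁻¹`
  let path (w : Fin (m - 1) → M) (j : ℕ) : M :=
    x * ((List.ofFn w).take k).prod⁻¹ * ((List.ofFn w).take j).prod
  refine ⟨(Fintype.piFinset fun _ ↦ S ∪ S⁻¹).image path, ?_, fun v hv hk hvx ↦ ?_⟩
  · calc #((Fintype.piFinset fun _ ↦ S ∪ S⁻¹).image path)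
        ≤ #(S ∪ S⁻¹) ^ (m - 1) := card_image_le.trans (by simp [Fintype.card_piFinset])
      _ ≤ (2 * #S) ^ (m - 1) := by
        gcongr
        exact (card_union_le _ _).trans (by rw [card_inv]; omega)
  refine ⟨path fun i ↦ (v i)⁻¹ * v (i + 1 : ℕ),
    mem_image_of_mem _ (Fintype.mem_piFinset.2 fun i ↦ ?_), fun j hj ↦ ?_⟩
  · rcases ((mulCayley_adj _ _ _).1 (hv.adj i (by omega))).2 with h | h
    · exact mem_union_left _ h
    · exact mem_union_right _ (mem_inv'.2 (by simpa using h))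
  · simp only [path]
    rw [← hvx, ← mul_prod_take_ofFn_inv_mul v hk, mul_inv_cancel_right,
      mul_prod_take_ofFn_inv_mul v hj]

end Cayley

end SimpleGraph

/-- With `u = s^(5/3)` and `β = 4s² + 12u` one has `1 - 4s²/β = 12u/β`, so the claim is
`2sβ² ≤ 576u³ = 576s⁵`, which follows from `β ≤ 16s²`. -/
lemma two_mul_div_one_sub_sq_le_four_mul_rpow {s : ℝ} (hs : 1 ≤ s) :
    2 * s / (1 - (2 * s) ^ 2 / (4 * s ^ 2 + 12 * s ^ ((5 : ℝ) / 3))) ^ 2 ≤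
      4 * s ^ ((5 : ℝ) / 3) := by
  set u := s ^ ((5 : ℝ) / 3) with hu
  have hu0 : 0 < u := by positivity
  have hus : u ≤ s ^ 2 := by
    rw [hu, ← Real.rpow_natCast]
    exact Real.rpow_le_rpow_of_exponent_le hs (by norm_num)
  have hu3 : u ^ 3 = s ^ 5 := by
    rw [hu, ← Real.rpow_natCast, ← Real.rpow_mul (by linarith)]
    norm_num
  have hβ : 0 < 4 * s ^ 2 + 12 * u := by positivity
  rw [show 1 - (2 * s) ^ 2 / (4 * s ^ 2 + 12 * u) = 12 * u / (4 * s ^ 2 + 12 * u) by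
    field_simp; ring, div_pow, div_div_eq_mul_div, div_le_iff₀ (by positivity)]
  nlinarith [mul_le_mul hus hus hu0.le (by positivity)]

theorem cayley_nonrepetitive_coloring_general {G : Type*} [Group G] (S : Finset G)
    (hS : 2 ≤ S.card)
    (N : ℕ) (hN : 4 * (S.card : ℝ) ^ 2 + 16 * (S.card : ℝ) ^ ((5 : ℝ) / 3) ≤ N) :
    ∃ c : G → Fin N,
      ¬ ∃ (n : ℕ) (v : ℕ → G), 1 ≤ n ∧
        (∀ i j, i < 2 * n → j < 2 * n → i ≠ j → v i ≠ v j) ∧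
        (∀ i, i + 1 < 2 * n → ∃ t ∈ S, v i * t = v (i + 1) ∨ v (i + 1) * t = v i) ∧
        (∀ i < n, c (v i) = c (v (n + i))) := by
  classical
  have hs : (1 : ℝ) ≤ S.card := by exact_mod_cast (by omega : 1 ≤ S.card)
  have hu : 0 < (S.card : ℝ) ^ ((5 : ℝ) / 3) := by positivity
  obtain ⟨c, hc⟩ := (SimpleGraph.mulCayley_pathsBoundedBy S).exists_nonrepetitive (α := Fin N)
    (β := 4 * (S.card : ℝ) ^ 2 + 12 * (S.card : ℝ) ^ ((5 : ℝ) / 3)) (by push_cast; linarith)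
    (by rw [Fintype.card_fin]; push_cast; linarith [two_mul_div_one_sub_sq_le_four_mul_rpow hs])
  refine ⟨c, fun ⟨n, v, hn, hinj, hadj, hrep⟩ ↦ ?_⟩
  have hpath : (SimpleGraph.mulCayley (S : Set G)).IsPathSeq (2 * n) v := by
    refine ⟨fun i hi j hj hij ↦ by_contra fun h ↦ hinj i j hi hj h hij, fun i hi ↦ ?_⟩
    obtain ⟨t, ht, h⟩ := hadj i hi
    exact (SimpleGraph.mulCayley_adj' _ _ _).2
      ⟨hinj i (i + 1) (by omega) hi (by omega), t, ht, h.imp_right Eq.symm⟩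
  obtain ⟨i, hi, hvi⟩ := hc ((range (2 * n)).image v) n v ⟨hn, hpath, hrep⟩
  exact hvi (mem_image_of_mem v (mem_range.2 hi))

/-- For any group `G` generated by a finite set `S` (with `|S| ≥ 2`), the undirected right
Cayley graph of `G` admits a nonrepetitive vertex coloring with `4|S|² + 16|S|^{5/3}`
colors: no path `v₁ … v_{2n}` (distinct vertices, consecutive ones adjacent) satisfies
`c(vᵢ) = c(v_{n+i})` for all `i`. -/
theorem cayley_nonrepetitive_coloring {G : Type*} [Group G] (S : Finset G)
    (hgen : Subgroup.closure (S : Set G) = ⊤) (hS : 2 ≤ S.card)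
    (N : ℕ) (hN : 4 * (S.card : ℝ) ^ 2 + 16 * (S.card : ℝ) ^ ((5 : ℝ) / 3) ≤ N) :
    ∃ c : G → Fin N,
      ¬ ∃ (n : ℕ) (v : ℕ → G), 1 ≤ n ∧
        (∀ i j, i < 2 * n → j < 2 * n → i ≠ j → v i ≠ v j) ∧
        (∀ i, i + 1 < 2 * n → ∃ t ∈ S, v i * t = v (i + 1) ∨ v (i + 1) * t = v i) ∧
        (∀ i < n, c (v i) = c (v (n + i))) :=
  cayley_nonrepetitive_coloring_general S hS N hN
end

section
/- Let F ⊆ A^+_ℤ be a set of connected (interval-supported) patterns over ℤ and β > 0 with |A| − Σ_{f∈F} β^{1−|f|} ≥ β. Then for all integers i ≤ j and s ∈ {i−1, j+1}, the number of locally admissible patterns satisfies |L_F^({i,…,j} ∪ {s})| ≥ β·|L_F^({i,…,j})|. -/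
/-- A pattern over `ℤ`: a finite support together with a labeling by letters of `A`. -/
structure ZPattern (A : Type*) where
  supp : Finset ℤ
  val : ℤ → A

/-- A pattern over `ℤ` is connected if its support is an interval. -/
def ZPattern.Connected {A : Type*} (f : ZPattern A) : Prop :=
  ∃ a b : ℤ, a ≤ b ∧ f.supp = Finset.Icc a b

/-- Locally admissible patterns of support `S`: no translate of a forbidden pattern
occurs inside `S`. -/
def zLocallyAdmissible {A : Type*} (F : Set (ZPattern A)) (S : Finset ℤ) :
    Set ({x // x ∈ S} → A) :=
  {q | ∀ f ∈ F, ∀ g : ℤ,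
    ¬ ∃ h : ∀ s ∈ f.supp, g + s ∈ S, ∀ s, ∀ hs : s ∈ f.supp, q ⟨g + s, h s hs⟩ = f.val s}

/-!
Write `L(I)` for the locally admissible words on `I`. Extending `q ∈ L({i,…,j})` by a letter `a`
at `j + 1` fails only if some `f ∈ F` occurs in the extension; as `q` is admissible, that
occurrence ends at `j + 1`, so `(a, q)` is determined by `q` on `{i,…,j - |f| + 1}`. By induction
on the length, each of the `|f| - 1` one-point extensions from there back to `{i,…,j}` multiplies
the number of admissible words by at least `β`, so `f` kills at most `β^{1-|f|} |L({i,…,j})|`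
pairs `(a, q)`, whence
`|A| |L({i,…,j})| ≤ ∑_f β^{1-|f|} |L({i,…,j})| + |L({i,…,j+1})|`. Extension at `i - 1` is the
same statement for the reflected patterns.
-/

section

open scoped Pointwise

theorem Finset.neg_Icc_eq {α : Type*} [AddCommGroup α] [LinearOrder α] [IsOrderedAddMonoid α]
    [LocallyFiniteOrder α] (a b : α) : -Finset.Icc a b = Finset.Icc (-b) (-a) := by
  ext x
  simp only [Finset.mem_neg', Finset.mem_Icc, neg_le, le_neg, and_comm]

variable {A : Type*}

namespace ZPattern

def OccursAt (f : ZPattern A) {S : Finset ℤ} (q : {x // x ∈ S} → A) (g : ℤ) : Prop :=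
  ∀ t ∈ f.supp, ∃ x : {x // x ∈ S}, x.1 = g + t ∧ q x = f.val t

theorem OccursAt.eq_of_forall_notMem {f : ZPattern A} {S : Finset ℤ}
    {q q' : {x // x ∈ S} → A} {g : ℤ} (hq : f.OccursAt q g) (hq' : f.OccursAt q' g)
    (h : ∀ x : {x // x ∈ S}, x.1 - g ∉ f.supp → q x = q' x) : q = q' := by
  funext x
  by_cases hx : x.1 - g ∈ f.supp
  · obtain ⟨y, hy, hqy⟩ := hq _ hx
    obtain ⟨y', hy', hqy'⟩ := hq' _ hx
    obtain rfl : y = x := Subtype.ext (by rw [hy]; ring)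
    obtain rfl : y' = y := Subtype.ext (by rw [hy, hy'])
    rw [hqy, hqy']
  · exact h x hx

def reflect (f : ZPattern A) : ZPattern A := ⟨-f.supp, fun t => f.val (-t)⟩

theorem reflect_involutive : Function.Involutive (reflect : ZPattern A → ZPattern A) := by
  rintro ⟨S, v⟩
  simp [reflect]

theorem Connected.reflect {f : ZPattern A} (hf : f.Connected) : f.reflect.Connected := by
  obtain ⟨a, b, hab, hsupp⟩ := hf
  exact ⟨-b, -a, neg_le_neg hab, by rw [ZPattern.reflect, hsupp, Finset.neg_Icc_eq]⟩

end ZPattern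

open ZPattern

theorem mem_zLocallyAdmissible_iff {F : Set (ZPattern A)} {S : Finset ℤ}
    {q : {x // x ∈ S} → A} : q ∈ zLocallyAdmissible F S ↔ ∀ f ∈ F, ∀ g, ¬ f.OccursAt q g := by
  refine forall₂_congr fun f _ => forall_congr' fun g => not_congr ⟨?_, fun h => ?_⟩
  · rintro ⟨h, hv⟩ t ht
    exact ⟨⟨g + t, h t ht⟩, rfl, hv t ht⟩
  · refine ⟨fun t ht => ?_, fun t ht => ?_⟩
    · obtain ⟨x, hx, -⟩ := h t ht
      exact hx ▸ x.2
    · obtain ⟨x, hx, hv⟩ := h t ht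
      rw [← hv]
      congr 1
      exact Subtype.ext hx.symm

variable {F : Set (ZPattern A)}

theorem restrict₂_mem_zLocallyAdmissible {S T : Finset ℤ} (hST : S ⊆ T)
    {q : {x // x ∈ T} → A} (hq : q ∈ zLocallyAdmissible F T) :
    Finset.restrict₂ (π := fun _ => A) hST q ∈ zLocallyAdmissible F S := by
  rw [mem_zLocallyAdmissible_iff] at hq ⊢
  intro f hf g hocc
  refine hq f hf g fun t ht => ?_
  obtain ⟨x, hx, hv⟩ := hocc t ht
  exact ⟨⟨x, hST x.2⟩, hx, hv⟩

section Extension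

variable {S : Finset ℤ} {s : ℤ}

def extendInsert (s : ℤ) (a : A) (q : {x // x ∈ S} → A) : {x // x ∈ insert s S} → A :=
  fun x => if h : x.1 ∈ S then q ⟨x, h⟩ else a

theorem extendInsert_of_mem (a : A) (q : {x // x ∈ S} → A) (x : {x // x ∈ insert s S})
    (h : x.1 ∈ S) : extendInsert s a q x = q ⟨x, h⟩ :=
  dif_pos h

theorem extendInsert_injective (hs : s ∉ S) :
    Function.Injective fun p : A × ({x // x ∈ S} → A) => extendInsert s p.1 p.2 := by
  rintro ⟨a, q⟩ ⟨a', q'⟩ h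
  have ha : a = a' := by
    simpa [extendInsert, hs] using congrFun h ⟨s, Finset.mem_insert_self s S⟩
  have hq : q = q' := funext fun x => by
    simpa [extendInsert] using congrFun h ⟨x, Finset.mem_insert_of_mem x.2⟩
  rw [ha, hq]

def killedBy (F : Set (ZPattern A)) (S : Finset ℤ) (s : ℤ) (f : ZPattern A) :
    Set (A × ({x // x ∈ S} → A)) :=
  {p | p.2 ∈ zLocallyAdmissible F S ∧ ∃ g, f.OccursAt (extendInsert s p.1 p.2) g}

theorem card_mul_ncard_le_ncard_killedBy_add [Fintype A] (hs : s ∉ S) :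
    Fintype.card A * (zLocallyAdmissible F S).ncard ≤
      (⋃ f : F, killedBy F S s f.1).ncard + (zLocallyAdmissible F (insert s S)).ncard := by
  set good := {p : A × ({x // x ∈ S} → A) |
    extendInsert s p.1 p.2 ∈ zLocallyAdmissible F (insert s S)}
  have hcover : (Set.univ : Set A) ×ˢ zLocallyAdmissible F S ⊆
      (⋃ f : F, killedBy F S s f.1) ∪ good := by
    rintro ⟨a, q⟩ ⟨-, hq⟩
    by_cases h : extendInsert s a q ∈ zLocallyAdmissible F (insert s S)
    · exact Or.inr h
    · simp only [mem_zLocallyAdmissible_iff, not_forall, not_not] at h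
      obtain ⟨f, hf, g, hocc⟩ := h
      exact Or.inl (Set.mem_iUnion.2 ⟨⟨f, hf⟩, hq, g, hocc⟩)
  have hgood : good.ncard ≤ (zLocallyAdmissible F (insert s S)).ncard :=
    Set.ncard_le_ncard_of_injOn _ (fun _ hp => hp) (extendInsert_injective hs).injOn
  calc Fintype.card A * (zLocallyAdmissible F S).ncard
      = ((Set.univ : Set A) ×ˢ zLocallyAdmissible F S).ncard := by
        rw [Set.ncard_prod, Set.ncard_univ, Nat.card_eq_fintype_card]
    _ ≤ ((⋃ f : F, killedBy F S s f.1) ∪ good).ncard := Set.ncard_le_ncard hcover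
    _ ≤ _ := (Set.ncard_union_le _ _).trans (Nat.add_le_add_left hgood _)

theorem ncard_iUnion_killedBy_le [Finite A] {c : ZPattern A → ℝ} (hc : ∀ f ∈ F, 0 ≤ c f)
    (hsum : Summable fun f : F => c f)
    (hkilled : ∀ f ∈ F,
      ((killedBy F S s f).ncard : ℝ) ≤ c f * (zLocallyAdmissible F S).ncard) :
    ((⋃ f : F, killedBy F S s f.1).ncard : ℝ) ≤
      (∑' f : F, c f) * (zLocallyAdmissible F S).ncard := by
  obtain ⟨I, hI, hcover⟩ := Set.finite_subset_iUnion
    (t := fun f : F => killedBy F S s f.1) (Set.toFinite _) subset_rfl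
  have hcover' : (⋃ f : F, killedBy F S s f.1) ⊆ ⋃ f ∈ hI.toFinset, killedBy F S s f.1 := by
    simpa using hcover
  calc ((⋃ f : F, killedBy F S s f.1).ncard : ℝ)
      ≤ ∑ f ∈ hI.toFinset, ((killedBy F S s f.1).ncard : ℝ) := by
        exact_mod_cast (Set.ncard_le_ncard hcover').trans (Finset.set_ncard_biUnion_le _ _)
    _ ≤ ∑ f ∈ hI.toFinset, c f * (zLocallyAdmissible F S).ncard :=
        Finset.sum_le_sum fun f _ => hkilled f f.2
    _ = (∑ f ∈ hI.toFinset, c f) * (zLocallyAdmissible F S).ncard := (Finset.sum_mul ..).symm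
    _ ≤ (∑' f : F, c f) * (zLocallyAdmissible F S).ncard :=
        mul_le_mul_of_nonneg_right (hsum.sum_le_tsum _ fun f _ => hc f f.2) (Nat.cast_nonneg _)

theorem mul_ncard_le_ncard_insert [Fintype A] (hs : s ∉ S) {c : ZPattern A → ℝ}
    (hc : ∀ f ∈ F, 0 ≤ c f) (hsum : Summable fun f : F => c f) {β : ℝ}
    (hcond : β ≤ Fintype.card A - ∑' f : F, c f)
    (hkilled : ∀ f ∈ F,
      ((killedBy F S s f).ncard : ℝ) ≤ c f * (zLocallyAdmissible F S).ncard) :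
    β * (zLocallyAdmissible F S).ncard ≤ (zLocallyAdmissible F (insert s S)).ncard := by
  have hcount : (Fintype.card A : ℝ) * (zLocallyAdmissible F S).ncard ≤
      (⋃ f : F, killedBy F S s f.1).ncard + (zLocallyAdmissible F (insert s S)).ncard := by
    exact_mod_cast card_mul_ncard_le_ncard_killedBy_add hs
  have hkill := ncard_iUnion_killedBy_le hc hsum hkilled
  nlinarith [mul_le_mul_of_nonneg_right hcond (Nat.cast_nonneg (zLocallyAdmissible F S).ncard)]

theorem ZPattern.OccursAt.exists_add_eq_of_extendInsert {f : ZPattern A} {q : {x // x ∈ S} → A}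
    {a : A} {g : ℤ} (hq : q ∈ zLocallyAdmissible F S) (hf : f ∈ F)
    (hocc : f.OccursAt (extendInsert s a q) g) : ∃ t ∈ f.supp, g + t = s := by
  by_contra! hne
  rw [mem_zLocallyAdmissible_iff] at hq
  refine hq f hf g fun t ht => ?_
  obtain ⟨x, hx, hv⟩ := hocc t ht
  have hxS : x.1 ∈ S := (Finset.mem_insert.1 x.2).resolve_left (hx ▸ hne t ht)
  exact ⟨⟨x, hxS⟩, hx, (extendInsert_of_mem a q x hxS).symm.trans hv⟩

end Extension

section Interval

open Finset

theorem ZPattern.OccursAt.extendInsert_Icc {f : ZPattern A} {i j a b g : ℤ} {x : A}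
    {q : {x // x ∈ Icc i j} → A} (hij : i ≤ j + 1) (hq : q ∈ zLocallyAdmissible F (Icc i j))
    (hf : f ∈ F) (hsupp : f.supp = Icc a b) (hocc : f.OccursAt (extendInsert (j + 1) x q) g) :
    g + b = j + 1 ∧ i ≤ g + a := by
  obtain ⟨t, ht, hgt⟩ := hocc.exists_add_eq_of_extendInsert hq hf
  rw [hsupp, mem_Icc] at ht
  obtain ⟨xa, hxa, -⟩ := hocc a (by rw [hsupp, mem_Icc]; omega)
  obtain ⟨xb, hxb, -⟩ := hocc b (by rw [hsupp, mem_Icc]; omega)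
  have ha := xa.2
  have hb := xb.2
  simp only [mem_insert, mem_Icc] at ha hb
  omega

theorem ncard_killedBy_Icc_le [Finite A] {f : ZPattern A} {i j a b : ℤ} (hij : i ≤ j + 1)
    (hf : f ∈ F) (hab : a ≤ b) (hsupp : f.supp = Icc a b) :
    (killedBy F (Icc i j) (j + 1) f).ncard ≤
      (zLocallyAdmissible F (Icc i (j - (b - a)))).ncard := by
  have hsub : Icc i (j - (b - a)) ⊆ Icc i j := Icc_subset_Icc_right (by omega)
  refine Set.ncard_le_ncard_of_injOn (fun p => restrict₂ (π := fun _ => A) hsub p.2)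
    (fun p hp => restrict₂_mem_zLocallyAdmissible hsub hp.1) ?_
  rintro ⟨x, q⟩ ⟨hq, g, hocc⟩ ⟨x', q'⟩ ⟨hq', g', hocc'⟩ heq
  obtain ⟨hg, -⟩ := OccursAt.extendInsert_Icc hij hq hf hsupp hocc
  obtain ⟨hg', -⟩ := OccursAt.extendInsert_Icc hij hq' hf hsupp hocc'
  obtain rfl : g = g' := by omega
  refine extendInsert_injective (by simp)
    (OccursAt.eq_of_forall_notMem hocc hocc' fun y hy => ?_)
  have hy' := y.2
  rw [hsupp, mem_Icc] at hy
  simp only [mem_insert, mem_Icc] at hy'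
  have hyS : y.1 ∈ Icc i (j - (b - a)) := mem_Icc.2 (by omega)
  dsimp only
  rw [extendInsert_of_mem _ _ _ (hsub hyS), extendInsert_of_mem _ _ _ (hsub hyS)]
  exact congrFun heq ⟨y, hyS⟩

theorem pow_mul_le_of_mul_le_succ {u : ℤ → ℝ} {β : ℝ} (hβ : 0 ≤ β) {lo n : ℤ}
    (h : ∀ m, lo ≤ m → m < n → β * u m ≤ u (m + 1)) (k : ℕ) (hk : lo ≤ n - k) :
    β ^ k * u (n - k) ≤ u n := by
  induction k with
  | zero => simp
  | succ k ih =>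
    calc β ^ (k + 1) * u (n - (k + 1 : ℕ)) = β ^ k * (β * u (n - k - 1)) := by
          push_cast; ring_nf
      _ ≤ β ^ k * u (n - k) := by
          gcongr
          simpa using h (n - k - 1) (by omega) (by omega)
      _ ≤ u n := ih (by omega)

theorem mul_ncard_le_ncard_insert_right [Fintype A] (hconn : ∀ f ∈ F, f.Connected) {β : ℝ}
    (hβ : 0 < β) (hsum : Summable fun f : F => β ^ (1 - (f.1.supp.card : ℤ)))
    (hcond : β ≤ Fintype.card A - ∑' f : F, β ^ (1 - (f.1.supp.card : ℤ))) (i j : ℤ)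
    (hij : i ≤ j + 1) :
    β * (zLocallyAdmissible F (Icc i j)).ncard ≤
      (zLocallyAdmissible F (insert (j + 1) (Icc i j))).ncard := by
  induction j using Int.strongRec (m := i - 1) with
  | lt j hj => omega
  | ge j _ ih =>
  have hchain : ∀ k : ℕ, i - 1 ≤ j - k →
      β ^ k * (zLocallyAdmissible F (Icc i (j - k))).ncard ≤
        (zLocallyAdmissible F (Icc i j)).ncard :=
    pow_mul_le_of_mul_le_succ (u := fun m => (zLocallyAdmissible F (Icc i m)).ncard) hβ.le
      fun m hm hmj => by
        have := ih m hmj (by omega)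
        rwa [insert_Icc_right_eq_Icc_add_one (by omega)] at this
  refine mul_ncard_le_ncard_insert (c := fun f => β ^ (1 - (f.supp.card : ℤ))) (by simp)
    (fun f _ => zpow_nonneg hβ.le _) hsum hcond fun f hf => ?_
  obtain ⟨a, b, hab, hsupp⟩ := hconn f hf
  rcases (killedBy F (Icc i j) (j + 1) f).eq_empty_or_nonempty with h | ⟨⟨x, q⟩, hq, g, hocc⟩
  · rw [h, Set.ncard_empty, Nat.cast_zero]
    positivity
  -- a pair killed by `f` places `f` inside `{i, …, j + 1}`, so `|f| - 1 ≤ j + 1 - i`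
  obtain ⟨hgb, hga⟩ := OccursAt.extendInsert_Icc hij hq hf hsupp hocc
  obtain ⟨k, hk⟩ : ∃ k : ℕ, b - a = k := ⟨(b - a).toNat, by omega⟩
  have hweight : β ^ (1 - (f.supp.card : ℤ)) = (β ^ k)⁻¹ := by
    rw [hsupp, Int.card_Icc, show 1 - ((b + 1 - a).toNat : ℤ) = -k by omega, zpow_neg,
      zpow_natCast]
  rw [hweight, le_inv_mul_iff₀ (pow_pos hβ k)]
  calc β ^ k * ((killedBy F (Icc i j) (j + 1) f).ncard : ℝ)
      ≤ β ^ k * (zLocallyAdmissible F (Icc i (j - k))).ncard := by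
        gcongr
        exact_mod_cast hk ▸ ncard_killedBy_Icc_le hij hf hab hsupp
    _ ≤ (zLocallyAdmissible F (Icc i j)).ncard := hchain k (by omega)

end Interval

section Reflection

variable {S : Finset ℤ}

def reflectFun (q : {x // x ∈ S} → A) : {x // x ∈ -S} → A :=
  fun x => q ⟨-x, Finset.mem_neg'.1 x.2⟩

theorem reflectFun_injective : Function.Injective (reflectFun : ({x // x ∈ S} → A) → _) := by
  intro q q' h
  funext x
  simpa [reflectFun] using congrFun h ⟨-x, Finset.neg_mem_neg x.2⟩

theorem ZPattern.OccursAt.reflect_of_reflectFun {f : ZPattern A} {q : {x // x ∈ S} → A} {g : ℤ}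
    (h : f.OccursAt (reflectFun q) g) : f.reflect.OccursAt q (-g) := by
  intro t ht
  obtain ⟨x, hx, hv⟩ := h (-t) (Finset.mem_neg'.1 ht)
  exact ⟨⟨-x, Finset.mem_neg'.1 x.2⟩, by dsimp only; omega, hv⟩

theorem reflectFun_mem_zLocallyAdmissible {q : {x // x ∈ S} → A}
    (hq : q ∈ zLocallyAdmissible F S) :
    reflectFun q ∈ zLocallyAdmissible (reflect ⁻¹' F) (-S) := by
  rw [mem_zLocallyAdmissible_iff] at hq ⊢
  exact fun f hf g hocc => hq _ hf _ hocc.reflect_of_reflectFun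

theorem ncard_le_ncard_zLocallyAdmissible_reflect [Finite A] :
    (zLocallyAdmissible F S).ncard ≤ (zLocallyAdmissible (reflect ⁻¹' F) (-S)).ncard :=
  Set.ncard_le_ncard_of_injOn reflectFun (fun _ => reflectFun_mem_zLocallyAdmissible)
    reflectFun_injective.injOn

theorem ncard_zLocallyAdmissible_reflect [Finite A] :
    (zLocallyAdmissible (reflect ⁻¹' F) (-S)).ncard = (zLocallyAdmissible F S).ncard := by
  refine le_antisymm ?_ ncard_le_ncard_zLocallyAdmissible_reflect
  have h := ncard_le_ncard_zLocallyAdmissible_reflect (F := reflect ⁻¹' F) (S := -S)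
  rwa [reflect_involutive.preimage F, neg_neg] at h

theorem mul_ncard_le_ncard_insert_left [Fintype A] (hconn : ∀ f ∈ F, f.Connected) {β : ℝ}
    (hβ : 0 < β) (hsum : Summable fun f : F => β ^ (1 - (f.1.supp.card : ℤ)))
    (hcond : β ≤ Fintype.card A - ∑' f : F, β ^ (1 - (f.1.supp.card : ℤ))) {i j : ℤ}
    (hij : i ≤ j + 1) :
    β * (zLocallyAdmissible F (Finset.Icc i j)).ncard ≤
      (zLocallyAdmissible F (insert (i - 1) (Finset.Icc i j))).ncard := by
  let e : ↥(reflect ⁻¹' F) ≃ F := (reflect_involutive.toPerm _).subtypeEquiv fun _ => Iff.rfl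
  have hweight (f : ↥(reflect ⁻¹' F)) :
      β ^ (1 - ((e f).1.supp.card : ℤ)) = β ^ (1 - (f.1.supp.card : ℤ)) := by
    show β ^ (1 - ((-f.1.supp).card : ℤ)) = _
    rw [Finset.card_neg]
  have key := mul_ncard_le_ncard_insert_right (F := reflect ⁻¹' F)
    (fun f hf => by simpa [reflect_involutive f] using (hconn _ hf).reflect) hβ
    ((e.summable_iff.2 hsum).congr hweight)
    (by rwa [← e.tsum_eq, funext hweight] at hcond) (-j) (-i) (by omega)
  rwa [← Finset.neg_Icc_eq, show -i + 1 = -(i - 1) by ring, ← Finset.neg_insert,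
    ncard_zLocallyAdmissible_reflect, ncard_zLocallyAdmissible_reflect] at key

end Reflection

end

/-- Extension lemma over `ℤ` for connected forbidden patterns: if
`|A| - ∑_{f∈F} β^{1-|f|} ≥ β`, then extending the interval `{i,…,j}` by one endpoint
multiplies the number of locally admissible patterns by at least `β`. -/
theorem zLocallyAdmissible_extension {A : Type*} [Fintype A]
    (F : Set (ZPattern A)) (hconn : ∀ f ∈ F, f.Connected)
    (β : ℝ) (hβ : 0 < β)
    (hsum : Summable fun f : F => β ^ (1 - (f.1.supp.card : ℤ)))
    (hcond : (Fintype.card A : ℝ) - ∑' f : F, β ^ (1 - (f.1.supp.card : ℤ)) ≥ β)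
    (i j : ℤ) (hij : i ≤ j) (s : ℤ) (hs : s = i - 1 ∨ s = j + 1) :
    β * ((zLocallyAdmissible F (Finset.Icc i j)).ncard : ℝ)
      ≤ ((zLocallyAdmissible F (insert s (Finset.Icc i j))).ncard : ℝ) := by
  rcases hs with rfl | rfl
  · exact mul_ncard_le_ncard_insert_left hconn hβ hsum hcond (by omega)
  · exact mul_ncard_le_ncard_insert_right hconn hβ hsum hcond i j (by omega)
end

section
/- Let F ⊆ A^+_ℤ be a set of connected patterns (words) over a finite alphabet A and β > 0 with |A| − Σ_{f∈F} β^{1−|f|} ≥ β. Then for every n ≥ 0, the number of words of length n over A avoiding all factors in F is at least β^n; in particular h(X_F) ≥ log β. -/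
/-!
Write `G n` for the number of `F`-avoiding words of length `n`. If `w` is such a word and `a` a
letter, either `w ++ [a]` avoids `F`, or it equals `v ++ f` with `f ∈ F` and `v` an avoiding word
of length `n + 1 - |f|`; hence `|A| G n ≤ G (n + 1) + ∑_f G (n + 1 - |f|)`. Inductively
`G (n + 1 - |f|) ≤ β ^ (1 - |f|) G n`, so `β G n ≤ G (n + 1)` and `β ^ n ≤ G n`.

For the entropy, the words of length `m` that extend by `k` letters on both sides to an avoiding
word form a factor-closed, hence submultiplicative, family; cutting an avoiding word of length
`k + q m + k` into blocks shows that there are at least `β ^ m` of them, for every `k`. These sets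
decrease in `k`, so they stabilise, and by compactness of `A ^ ℤ` the limit set consists of words
of `X_F`. Fekete's lemma provides the limit `h₀`.
-/

/-- A finite word `w` occurs in a bi-infinite configuration `x : ℤ → A` if some translate
of `w` matches `x`. -/
def occursIn {A : Type*} (w : List A) (x : ℤ → A) : Prop :=
  ∃ g : ℤ, ∀ i : ℕ, ∀ hi : i < w.length, x (g + i) = w.get ⟨i, hi⟩

/-- The subshift over `ℤ` defined by the set of forbidden words `F`. -/
def zShift {A : Type*} (F : Set (List A)) : Set (ℤ → A) :=
  {x | ∀ w ∈ F, ¬ occursIn w x}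

/-- The language of length-`n` words appearing in some configuration of `X`. -/
def lang {A : Type*} (X : Set (ℤ → A)) (n : ℕ) : Set (List A) :=
  {w | w.length = n ∧ ∃ x ∈ X, occursIn w x}

open Filter Topology

theorem le_of_forall_pow_le_mul_pow {a b C : ℝ} (hb : 0 ≤ b) (h : ∀ q : ℕ, a ^ q ≤ C * b ^ q) :
    a ≤ b := by
  by_contra! hab
  rcases hb.eq_or_lt with rfl | hb
  · linarith [show a ≤ 0 by simpa using h 1]
  · obtain ⟨q, hq⟩ := pow_unbounded_of_one_lt C ((one_lt_div hb).2 hab)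
    rw [div_pow, lt_div_iff₀ (pow_pos hb q)] at hq
    linarith [h q]

theorem exists_iInter_eq_of_antitone {α : Type*} {s : ℕ → Set α} (hs : Antitone s)
    (hfin : (s 0).Finite) : ∃ k₀, ⋂ k, s k = s k₀ := by
  set k₀ := Function.argmin fun k => (s k).ncard
  refine ⟨k₀, (Set.iInter_subset _ _).antisymm (Set.subset_iInter fun k => ?_)⟩
  rcases le_total k k₀ with hk | hk
  · exact hs hk
  · exact (Set.eq_of_subset_of_ncard_le (hs hk) (Function.argmin_le (fun k => (s k).ncard) k)
      (hfin.subset (hs (Nat.zero_le _)))).ge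

section Words

variable {A : Type*}

def wordsOfLength (W : Set (List A)) (n : ℕ) : Set (List A) := {w | w.length = n ∧ w ∈ W}

def FactorClosed (W : Set (List A)) : Prop := ∀ ⦃w v⦄, w ∈ W → v <:+: w → v ∈ W

def avoiding (F : Set (List A)) : Set (List A) := {w | ∀ u ∈ F, ¬ u <:+: w}

def factors (X : Set (ℤ → A)) : Set (List A) := {w | ∃ x ∈ X, occursIn w x}

def extendable (F : Set (List A)) (k : ℕ) : Set (List A) :=
  {w | ∃ u v : List A, k ≤ u.length ∧ k ≤ v.length ∧ u ++ w ++ v ∈ avoiding F}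

def window (x : ℤ → A) (a : ℤ) (n : ℕ) : List A := List.ofFn fun i : Fin n => x (a + i)

theorem finite_wordsOfLength [Finite A] (W : Set (List A)) (n : ℕ) :
    (wordsOfLength W n).Finite :=
  (List.finite_length_eq A n).subset fun _ hw => hw.1

theorem FactorClosed.ncard_add_le [Finite A] {W : Set (List A)} (hW : FactorClosed W)
    (m n : ℕ) :
    (wordsOfLength W (m + n)).ncard ≤ (wordsOfLength W m).ncard * (wordsOfLength W n).ncard := by
  rw [← Set.ncard_prod]
  refine Set.ncard_le_ncard_of_injOn (fun w => (w.take m, w.drop m)) ?_ ?_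
    ((finite_wordsOfLength W m).prod (finite_wordsOfLength W n))
  · rintro w ⟨hlen, hw⟩
    exact ⟨⟨by simp [hlen], hW hw (List.take_prefix m w).isInfix⟩,
      ⟨by simp [hlen], hW hw (List.drop_suffix m w).isInfix⟩⟩
  · intro w _ v _ h
    simp only [Prod.mk.injEq] at h
    rw [← List.take_append_drop m w, ← List.take_append_drop m v, h.1, h.2]

theorem FactorClosed.ncard_mul_le_pow [Finite A] {W : Set (List A)} (hW : FactorClosed W)
    (m q : ℕ) : (wordsOfLength W (q * m)).ncard ≤ (wordsOfLength W m).ncard ^ q := by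
  induction q with
  | zero =>
    have hsub : wordsOfLength W (0 * m) ⊆ {[]} := fun w hw => by simpa [zero_mul] using hw.1
    simpa using Set.ncard_le_ncard hsub
  | succ q ih =>
    rw [Nat.succ_mul, pow_succ]
    exact (hW.ncard_add_le _ _).trans (Nat.mul_le_mul_right _ ih)

theorem FactorClosed.exists_tendsto_log_ncard_div [Finite A] {W : Set (List A)}
    (hW : FactorClosed W) (hne : ∀ n, (wordsOfLength W n).Nonempty) :
    ∃ h₀ : ℝ, Tendsto (fun n : ℕ => Real.log (wordsOfLength W n).ncard / n) atTop (𝓝 h₀) := by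
  have hone : ∀ n, (1 : ℝ) ≤ (wordsOfLength W n).ncard := fun n => by
    exact_mod_cast (Set.ncard_pos (finite_wordsOfLength W n)).2 (hne n)
  have hsub : Subadditive fun n => Real.log (wordsOfLength W n).ncard := fun m n =>
    calc Real.log (wordsOfLength W (m + n)).ncard
        ≤ Real.log ((wordsOfLength W m).ncard * (wordsOfLength W n).ncard) :=
          Real.log_le_log (by linarith [hone (m + n)]) (by exact_mod_cast hW.ncard_add_le m n)
      _ = _ := Real.log_mul (by linarith [hone m]) (by linarith [hone n])
  refine ⟨hsub.lim, hsub.tendsto_lim ⟨0, ?_⟩⟩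
  rintro _ ⟨n, rfl⟩
  exact div_nonneg (Real.log_nonneg (hone n)) n.cast_nonneg

section Avoiding

theorem factorClosed_avoiding (F : Set (List A)) : FactorClosed (avoiding F) :=
  fun _ _ hw hvw u hu huv => hw u hu (huv.trans hvw)

theorem wordsOfLength_avoiding_zero {F : Set (List A)} (hne : ∀ f ∈ F, f ≠ []) :
    wordsOfLength (avoiding F) 0 = {[]} := by
  ext w
  simp only [wordsOfLength, List.length_eq_zero_iff, Set.mem_ofPred_eq, Set.mem_singleton_iff,
    and_iff_left_iff_imp]
  rintro rfl u hu hinf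
  exact hne u hu (List.eq_nil_of_infix_nil hinf)

theorem card_mul_ncard_avoiding_le [Fintype A] (F : Set (List A)) (n : ℕ) (s : Finset F)
    (hs : ∀ f : F, f.1.length ≤ n + 1 → f ∈ s) :
    Fintype.card A * (wordsOfLength (avoiding F) n).ncard ≤
      (wordsOfLength (avoiding F) (n + 1)).ncard +
        ∑ f ∈ s, (wordsOfLength (avoiding F) (n + 1 - f.1.length)).ncard := by
  set G := wordsOfLength (avoiding F)
  have hcover : (fun p : List A × A => p.1 ++ [p.2]) '' (G n ×ˢ Set.univ) ⊆
      G (n + 1) ∪ ⋃ f ∈ s, (· ++ f.1) '' G (n + 1 - f.1.length) := by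
    rintro _ ⟨⟨w, a⟩, ⟨⟨hlen, hw⟩, -⟩, rfl⟩
    dsimp only at hlen hw ⊢
    by_cases hwa : w ++ [a] ∈ avoiding F
    · exact Or.inl ⟨by simp [hlen], hwa⟩
    simp only [avoiding, Set.mem_ofPred_eq, not_forall, not_not] at hwa
    obtain ⟨u, hu, hinf⟩ := hwa
    obtain ⟨v, hv⟩ := (List.infix_concat_iff.1 hinf).resolve_right (hw u hu)
    have hu₀ : u ≠ [] := by rintro rfl; exact hw _ hu List.nil_infix
    have hvu := congrArg List.length hv
    simp only [List.length_append, List.length_singleton, hlen] at hvu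
    have hlenu : 0 < u.length := List.length_pos_iff.2 hu₀
    have hvw : v <+: w := List.prefix_of_prefix_length_le ⟨u, hv⟩ (List.prefix_append w [a])
      (by omega)
    refine Or.inr (Set.mem_biUnion (hs ⟨u, hu⟩ (show u.length ≤ n + 1 by omega)) ⟨v, ?_, hv⟩)
    exact ⟨by simp; omega, factorClosed_avoiding F hw hvw.isInfix⟩
  have hinj : Function.Injective fun p : List A × A => p.1 ++ [p.2] := fun p q h => by
    obtain ⟨h₁, h₂⟩ := List.append_inj' h rfl
    exact Prod.ext h₁ (List.singleton_injective h₂)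
  calc Fintype.card A * (G n).ncard
      = ((fun p : List A × A => p.1 ++ [p.2]) '' (G n ×ˢ Set.univ)).ncard := by
        rw [Set.ncard_image_of_injective _ hinj, Set.ncard_prod, Set.ncard_univ,
          Nat.card_eq_fintype_card, mul_comm]
    _ ≤ (G (n + 1) ∪ ⋃ f ∈ s, (· ++ f.1) '' G (n + 1 - f.1.length)).ncard :=
        Set.ncard_le_ncard hcover ((finite_wordsOfLength _ _).union
          (s.finite_toSet.biUnion fun f _ => (finite_wordsOfLength _ _).image _))
    _ ≤ (G (n + 1)).ncard + (⋃ f ∈ s, (· ++ f.1) '' G (n + 1 - f.1.length)).ncard :=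
        Set.ncard_union_le _ _
    _ ≤ (G (n + 1)).ncard + ∑ f ∈ s, (G (n + 1 - f.1.length)).ncard :=
        Nat.add_le_add_left ((s.set_ncard_biUnion_le _).trans
          (Finset.sum_le_sum fun f _ => Set.ncard_image_le (finite_wordsOfLength _ _))) _

variable [Fintype A] {F : Set (List A)} {β : ℝ}

theorem mul_ncard_avoiding_le_succ (hne : ∀ f ∈ F, f ≠ []) (hβ : 0 < β)
    (hsum : Summable fun f : F => β ^ (1 - (f.1.length : ℤ)))
    (hcond : (Fintype.card A : ℝ) - ∑' f : F, β ^ (1 - (f.1.length : ℤ)) ≥ β) {n : ℕ}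
    (hchain : ∀ j ≤ n, β ^ (n - j) * (wordsOfLength (avoiding F) j).ncard ≤
      (wordsOfLength (avoiding F) n).ncard) :
    β * (wordsOfLength (avoiding F) n).ncard ≤ (wordsOfLength (avoiding F) (n + 1)).ncard := by
  set G := fun j => ((wordsOfLength (avoiding F) j).ncard : ℝ)
  set s := ((List.finite_length_le A (n + 1)).preimage Subtype.val_injective.injOn).toFinset
  have hs : ∀ f : F, f.1.length ≤ n + 1 → f ∈ s := fun f hf => by simpa [s] using hf
  have hterm : ∀ f ∈ s, G (n + 1 - f.1.length) ≤ β ^ (1 - (f.1.length : ℤ)) * G n := by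
    intro f hf
    have hlen : f.1.length ≤ n + 1 := by simpa [s] using hf
    have hpos : 0 < f.1.length := List.length_pos_iff.2 (hne f.1 f.2)
    have hinv : β ^ (1 - (f.1.length : ℤ)) * β ^ (f.1.length - 1) = 1 := by
      rw [← zpow_natCast, ← zpow_add₀ hβ.ne', Nat.cast_sub hpos, Nat.cast_one, sub_add_sub_cancel',
        sub_self, zpow_zero]
    have hj := hchain (n + 1 - f.1.length) (by omega)
    rw [show n - (n + 1 - f.1.length) = f.1.length - 1 by omega] at hj
    calc G (n + 1 - f.1.length)
        = β ^ (1 - (f.1.length : ℤ)) * (β ^ (f.1.length - 1) * G (n + 1 - f.1.length)) := by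
          rw [← mul_assoc, hinv, one_mul]
      _ ≤ β ^ (1 - (f.1.length : ℤ)) * G n := by gcongr
  have hcount : (Fintype.card A : ℝ) * G n ≤ G (n + 1) + ∑ f ∈ s, G (n + 1 - f.1.length) := by
    simp only [G]
    exact_mod_cast card_mul_ncard_avoiding_le F n s hs
  have hbad : ∑ f ∈ s, G (n + 1 - f.1.length) ≤ (∑' f : F, β ^ (1 - (f.1.length : ℤ))) * G n :=
    calc ∑ f ∈ s, G (n + 1 - f.1.length) ≤ (∑ f ∈ s, β ^ (1 - (f.1.length : ℤ))) * G n := by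
          rw [Finset.sum_mul]; exact Finset.sum_le_sum hterm
      _ ≤ _ := by
          gcongr
          exact hsum.sum_le_tsum s fun f _ => (zpow_pos hβ _).le
  have hGn : 0 ≤ G n := Nat.cast_nonneg _
  nlinarith

theorem pow_le_ncard_avoiding (hne : ∀ f ∈ F, f ≠ []) (hβ : 0 < β)
    (hsum : Summable fun f : F => β ^ (1 - (f.1.length : ℤ)))
    (hcond : (Fintype.card A : ℝ) - ∑' f : F, β ^ (1 - (f.1.length : ℤ)) ≥ β) (n : ℕ) :
    β ^ n ≤ (wordsOfLength (avoiding F) n).ncard := by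
  have hchain : ∀ n, ∀ j ≤ n, β ^ (n - j) * (wordsOfLength (avoiding F) j).ncard ≤
      (wordsOfLength (avoiding F) n).ncard := by
    intro n
    induction n with
    | zero => intro j hj; simp [Nat.le_zero.1 hj]
    | succ n ih =>
      intro j hj
      rcases hj.eq_or_lt with rfl | hj
      · simp
      calc β ^ (n + 1 - j) * (wordsOfLength (avoiding F) j).ncard
          = β * (β ^ (n - j) * (wordsOfLength (avoiding F) j).ncard) := by
            rw [Nat.sub_add_comm (by omega), pow_succ]; ring
        _ ≤ β * (wordsOfLength (avoiding F) n).ncard := by gcongr; exact ih j (by omega)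
        _ ≤ _ := mul_ncard_avoiding_le_succ hne hβ hsum hcond ih
  simpa [wordsOfLength_avoiding_zero hne] using hchain n 0 n.zero_le

end Avoiding

section Extendable

theorem factorClosed_extendable (F : Set (List A)) (k : ℕ) : FactorClosed (extendable F k) := by
  rintro _ v ⟨u, u', hu, hu', hw⟩ ⟨s, t, rfl⟩
  exact ⟨u ++ s, t ++ u', by simp; omega, by simp; omega, by simpa using hw⟩

theorem extendable_anti (F : Set (List A)) : Antitone (extendable F) :=
  fun _ _ hk _ ⟨u, v, hu, hv, hw⟩ => ⟨u, v, hk.trans hu, hk.trans hv, hw⟩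

theorem ncard_avoiding_le_mul_extendable [Finite A] (F : Set (List A)) (k n : ℕ) :
    (wordsOfLength (avoiding F) (k + n + k)).ncard ≤
      (wordsOfLength (avoiding F) k).ncard ^ 2 * (wordsOfLength (extendable F k) n).ncard := by
  have hsplit : ∀ w : List A, w = w.take k ++ (w.drop k).take n ++ w.drop (k + n) := fun w => by
    rw [← List.drop_drop, List.append_assoc, List.take_append_drop, List.take_append_drop]
  rw [sq, mul_right_comm, ← Set.ncard_prod, ← Set.ncard_prod]
  refine Set.ncard_le_ncard_of_injOn (fun w => ((w.take k, (w.drop k).take n), w.drop (k + n)))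
    ?_ ?_ (((finite_wordsOfLength _ _).prod (finite_wordsOfLength _ _)).prod
      (finite_wordsOfLength _ _))
  · rintro w ⟨hlen, hw⟩
    refine ⟨⟨⟨by simp; omega, factorClosed_avoiding F hw (List.take_prefix k w).isInfix⟩,
      by simp; omega, w.take k, w.drop (k + n), by simp; omega, by simp; omega, ?_⟩,
      by simp; omega, factorClosed_avoiding F hw (List.drop_suffix _ w).isInfix⟩
    rwa [← hsplit]
  · intro w _ v _ h
    simp only [Prod.mk.injEq] at h
    rw [hsplit w, hsplit v, h.1.1, h.1.2, h.2]

theorem pow_le_ncard_extendable [Finite A] {F : Set (List A)} {β : ℝ} (hβ : 0 < β)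
    (hG : ∀ n, β ^ n ≤ (wordsOfLength (avoiding F) n).ncard) (k n : ℕ) :
    β ^ n ≤ (wordsOfLength (extendable F k) n).ncard := by
  set G := fun j => ((wordsOfLength (avoiding F) j).ncard : ℝ)
  set E := fun j => ((wordsOfLength (extendable F k) j).ncard : ℝ)
  refine le_of_forall_pow_le_mul_pow (C := G k ^ 2 / β ^ (2 * k)) (Nat.cast_nonneg _) fun q => ?_
  rw [div_mul_eq_mul_div, le_div_iff₀ (by positivity)]
  calc (β ^ n) ^ q * β ^ (2 * k) = β ^ (k + q * n + k) := by ring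
    _ ≤ G (k + q * n + k) := hG _
    _ ≤ G k ^ 2 * E (q * n) := by
        simp only [G, E]
        exact_mod_cast ncard_avoiding_le_mul_extendable F k (q * n)
    _ ≤ G k ^ 2 * E n ^ q := by
        gcongr
        simp only [E]
        exact_mod_cast (factorClosed_extendable F k).ncard_mul_le_pow n q

end Extendable

section Window

@[simp]
theorem length_window (x : ℤ → A) (a : ℤ) (n : ℕ) : (window x a n).length = n :=
  List.length_ofFn

theorem window_add (x : ℤ → A) (a : ℤ) (m n : ℕ) :
    window x a (m + n) = window x a m ++ window x (a + m) n := by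
  simp only [window, List.ofFn_add]
  congr 2
  funext i
  simp [add_assoc]

theorem window_infix (x : ℤ → A) {a b : ℤ} {m n : ℕ} (hab : a ≤ b) (hn : b + n ≤ a + m) :
    window x b n <:+: window x a m := by
  obtain ⟨i, rfl⟩ : ∃ i : ℕ, b = a + i := ⟨(b - a).toNat, by omega⟩
  obtain ⟨j, rfl⟩ : ∃ j : ℕ, m = i + n + j := ⟨m - (i + n), by omega⟩
  rw [window_add, window_add]
  exact List.infix_append _ _ _

theorem window_eq_of_eq_append {x : ℤ → A} {a : ℤ} {l₁ l₂ l₃ : List A}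
    (h : window x a (l₁ ++ l₂ ++ l₃).length = l₁ ++ l₂ ++ l₃) :
    window x (a + l₁.length) l₂.length = l₂ := by
  rw [List.length_append, List.length_append, window_add, window_add] at h
  exact (List.append_inj (List.append_inj h (by simp)).1 (by simp)).2

theorem window_getD (l : List A) (a : ℤ) (d : A) :
    window (fun i => l.getD (i - a).toNat d) a l.length = l := by
  refine List.ext_getElem (by simp) fun i _ hi => ?_
  simp [window]

theorem occursIn_iff_window {w : List A} {x : ℤ → A} :
    occursIn w x ↔ ∃ g, window x g w.length = w := by
  refine exists_congr fun g => ⟨fun h => ?_, fun h i hi => ?_⟩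
  · exact List.ext_getElem (by simp) fun i _ hi => by simp [window, h i hi]
  · simpa [window] using List.getElem_of_eq h (by simpa using hi)

theorem isClosed_setOf_window [TopologicalSpace A] [DiscreteTopology A] (P : List A → Prop)
    (a : ℤ) (n : ℕ) : IsClosed {x : ℤ → A | P (window x a n)} :=
  (isClosed_discrete {y : Fin n → A | P (List.ofFn y)}).preimage
    (f := fun (x : ℤ → A) (i : Fin n) => x (a + i)) (continuous_pi fun _ => continuous_apply _)

end Window

theorem factorClosed_factors (X : Set (ℤ → A)) : FactorClosed (factors X) := by
  rintro _ v ⟨x, hx, hocc⟩ ⟨s, t, rfl⟩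
  obtain ⟨g, hg⟩ := occursIn_iff_window.1 hocc
  exact ⟨x, hx, occursIn_iff_window.2 ⟨_, window_eq_of_eq_append hg⟩⟩

theorem iInter_extendable_subset_factors [Finite A] (F : Set (List A)) :
    ⋂ k, extendable F k ⊆ factors (zShift F) := by
  intro w hw
  rw [Set.mem_iInter] at hw
  let : TopologicalSpace A := ⊥
  have : DiscreteTopology A := ⟨rfl⟩
  set C : ℕ → Set (ℤ → A) := fun k =>
    {x | window x 0 w.length = w} ∩ {x | window x (-k) (k + w.length + k) ∈ avoiding F}
  have hclosed : ∀ k, IsClosed (C k) := fun k =>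
    (isClosed_setOf_window (· = w) _ _).inter (isClosed_setOf_window (· ∈ avoiding F) _ _)
  have hanti : ∀ k, C (k + 1) ⊆ C k := fun k x hx =>
    ⟨hx.1, factorClosed_avoiding F hx.2 (window_infix x (by omega) (by push_cast; omega))⟩
  have hne : ∀ k, (C k).Nonempty := by
    intro k
    obtain ⟨u, v, hu, hv, hav⟩ := hw (k + 1)
    set x : ℤ → A := fun i => (u ++ w ++ v).getD (i + u.length).toNat (u[0]'(by omega))
    have hx : window x (-u.length) (u ++ w ++ v).length = u ++ w ++ v := by
      simpa [x] using window_getD (u ++ w ++ v) (-u.length) (u[0]'(by omega))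
    refine ⟨x, by simpa using window_eq_of_eq_append hx, ?_⟩
    refine factorClosed_avoiding F hav (hx ▸ window_infix x (by omega) ?_)
    simp only [List.length_append]
    push_cast
    omega
  obtain ⟨x, hx⟩ := (hclosed 0).isCompact.nonempty_iInter_of_sequence_nonempty_isCompact_isClosed
    C hanti hne hclosed
  rw [Set.mem_iInter] at hx
  refine ⟨x, fun f hf hocc => ?_, occursIn_iff_window.2 ⟨0, (hx 0).1⟩⟩
  obtain ⟨g, hg⟩ := occursIn_iff_window.1 hocc
  set k := g.natAbs + f.length
  have hinf : window x g f.length <:+: window x (-k) (k + w.length + k) :=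
    window_infix x (by omega) (by push_cast; omega)
  rw [hg] at hinf
  exact (hx k).2 f hf hinf

theorem pow_le_ncard_lang [Finite A] {F : Set (List A)} {β : ℝ} (hβ : 0 < β)
    (hG : ∀ n, β ^ n ≤ (wordsOfLength (avoiding F) n).ncard) (n : ℕ) :
    β ^ n ≤ (lang (zShift F) n).ncard := by
  obtain ⟨k₀, hk₀⟩ := exists_iInter_eq_of_antitone (s := fun k => wordsOfLength (extendable F k) n)
    (fun k k' hk w hw => ⟨hw.1, extendable_anti F hk hw.2⟩) (finite_wordsOfLength _ _)
  have hsub : ⋂ k, wordsOfLength (extendable F k) n ⊆ lang (zShift F) n := fun w hw => by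
    simp only [Set.mem_iInter] at hw
    exact ⟨(hw 0).1, iInter_extendable_subset_factors F (Set.mem_iInter.2 fun k => (hw k).2)⟩
  calc β ^ n ≤ (wordsOfLength (extendable F k₀) n).ncard := pow_le_ncard_extendable hβ hG k₀ n
    _ ≤ (lang (zShift F) n).ncard := by
        rw [← hk₀]
        exact_mod_cast Set.ncard_le_ncard hsub (finite_wordsOfLength _ _)

end Words

/-- If `|A| - ∑_{f∈F} β^{1-|f|} ≥ β` for a set of forbidden words `F`, then for every `n`
there are at least `β^n` words of length `n` avoiding all factors in `F`; in particular
the entropy of `X_F` is at least `log β`. -/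
theorem word_count_and_entropy {A : Type*} [Fintype A]
    (F : Set (List A)) (hne : ∀ f ∈ F, f ≠ [])
    (β : ℝ) (hβ : 0 < β)
    (hsum : Summable fun f : F => β ^ (1 - (f.1.length : ℤ)))
    (hcond : (Fintype.card A : ℝ) - ∑' f : F, β ^ (1 - (f.1.length : ℤ)) ≥ β) :
    (∀ n : ℕ,
      β ^ n ≤ (({w : List A | w.length = n ∧ ∀ u ∈ F, ¬ u <:+: w}).ncard : ℝ)) ∧
    ∃ h₀ : ℝ, Filter.Tendsto
        (fun n : ℕ => Real.log ((lang (zShift F) n).ncard) / n)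
        Filter.atTop (nhds h₀) ∧ Real.log β ≤ h₀ := by
  have hG := pow_le_ncard_avoiding hne hβ hsum hcond
  have hlang := pow_le_ncard_lang hβ hG
  have hne_lang : ∀ n, (lang (zShift F) n).Nonempty := fun n =>
    Set.nonempty_of_ncard_ne_zero fun h => by
      have := hlang n
      rw [h, Nat.cast_zero] at this
      linarith [pow_pos hβ n]
  obtain ⟨h₀, htends⟩ := (factorClosed_factors (zShift F)).exists_tendsto_log_ncard_div hne_lang
  refine ⟨hG, h₀, htends, ge_of_tendsto htends ?_⟩
  filter_upwards [eventually_gt_atTop 0] with n hn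
  rw [le_div_iff₀ (by exact_mod_cast hn), mul_comm, ← Real.log_pow]
  exact Real.log_le_log (pow_pos hβ n) (hlang n)
end

section
/- Let F be a nontrivial set of connected patterns over ℤ (F contains at least one pattern of length ≥ 2). If real β > 0 and integer k ≥ 1 satisfy |A| − Σ_{f∈F} β^{1−|f|} > β + k − 1 (Pavlov's condition), then there exists β' > k satisfying |A| − Σ_{f∈F} (β')^{1−|f|} ≥ β'. -/
/-!
Write `g(x) = ∑_{f ∈ F} x ^ (1 - |f|)`; every exponent is `≤ 0`, so `g` is antitone on `(0, ∞)`.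
If `β < 1`, a pattern `f₀` of length `≥ 2` gives `g(β) - g(1) ≥ β⁻¹ - 1 ≥ 1 - β`, so Pavlov's
condition still holds with `β` replaced by `1`. For a base `b ≥ 1` satisfying it, take
`β' = |A| - g(b)`: then `β' > b + k - 1 ≥ max(b, k)`, and `β' ≥ b` gives `g(β') ≤ g(b) = |A| - β'`.
-/

lemma zpow_le_zpow_left_of_nonpos₀ {K : Type*} [Field K] [LinearOrder K] [IsStrictOrderedRing K]
    {x y : K} {m : ℤ} (hm : m ≤ 0) (hx : 0 < x) (hxy : x ≤ y) : y ^ m ≤ x ^ m := by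
  simpa only [zpow_neg, inv_inv] using
    inv_anti₀ (zpow_pos hx _) (zpow_le_zpow_left₀ (neg_nonneg.2 hm) hx.le hxy)

section NonposExponents

variable {ι : Type*} {e : ι → ℤ}

lemma summable_zpow_of_le (he : ∀ i, e i ≤ 0) {x y : ℝ} (hx : 0 < x) (hxy : x ≤ y)
    (hs : Summable fun i => x ^ e i) : Summable fun i => y ^ e i :=
  hs.of_nonneg_of_le (fun _ => zpow_nonneg (hx.le.trans hxy) _)
    (fun i => zpow_le_zpow_left_of_nonpos₀ (he i) hx hxy)

lemma tsum_zpow_le_of_le (he : ∀ i, e i ≤ 0) {x y : ℝ} (hx : 0 < x) (hxy : x ≤ y)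
    (hs : Summable fun i => x ^ e i) : ∑' i, y ^ e i ≤ ∑' i, x ^ e i :=
  (summable_zpow_of_le he hx hxy hs).tsum_le_tsum
    (fun i => zpow_le_zpow_left_of_nonpos₀ (he i) hx hxy) hs

lemma one_add_tsum_one_zpow_le (he : ∀ i, e i ≤ 0) {i₀ : ι} (hi₀ : e i₀ ≤ -1) {x : ℝ}
    (hx : 0 < x) (hx1 : x ≤ 1) (hs : Summable fun i => x ^ e i) :
    1 + ∑' i, (1 : ℝ) ^ e i ≤ x + ∑' i, x ^ e i := by
  have hs1 := summable_zpow_of_le he hx hx1 hs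
  have hgap : x ^ e i₀ - (1 : ℝ) ^ e i₀ ≤ ∑' i, (x ^ e i - (1 : ℝ) ^ e i) :=
    (hs.sub hs1).le_tsum i₀ fun i _ =>
      sub_nonneg.2 (zpow_le_zpow_left_of_nonpos₀ (he i) hx hx1)
  have hinv : x⁻¹ ≤ x ^ e i₀ := by
    simpa using zpow_le_zpow_right_of_le_one₀ hx hx1 hi₀
  have hamgm : 1 - x ≤ x⁻¹ - 1 := by
    have : x * x⁻¹ = 1 := mul_inv_cancel₀ hx.ne'
    nlinarith [sq_nonneg (1 - x)]
  rw [hs.tsum_sub hs1, one_zpow] at hgap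
  linarith

lemma exists_lt_and_le_sub_tsum_zpow (he : ∀ i, e i ≤ 0) {b c k : ℝ} (hb : 1 ≤ b) (hk : 1 ≤ k)
    (hs : Summable fun i => b ^ e i) (h : ∑' i, b ^ e i + b + k - 1 < c) :
    ∃ β' : ℝ, k < β' ∧ (Summable fun i => β' ^ e i) ∧ β' ≤ c - ∑' i, β' ^ e i := by
  have hb₀ : 0 < b := zero_lt_one.trans_le hb
  have hbβ' : b ≤ c - ∑' i, b ^ e i := by linarith
  exact ⟨c - ∑' i, b ^ e i, by linarith, summable_zpow_of_le he hb₀ hbβ' hs,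
    sub_le_sub_left (tsum_zpow_le_of_le he hb₀ hbβ' hs) c⟩

end NonposExponents

/-- Pavlov's condition implies ours with a strictly better bound: if `F` is a nontrivial
set of forbidden words and `|A| - ∑_{f∈F} β^{1-|f|} > β + k - 1` for some `β > 0` and
integer `k ≥ 1`, then there is `β' > k` with `|A| - ∑_{f∈F} (β')^{1-|f|} ≥ β'`. -/
theorem pavlov_implies_counting {A : Type*} [Fintype A]
    (F : Set (List A)) (hne : ∀ f ∈ F, f ≠ [])
    (hnontriv : ∃ f ∈ F, 2 ≤ f.length)
    (β : ℝ) (hβ : 0 < β) (k : ℕ) (hk : 1 ≤ k)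
    (hsum : Summable fun f : F => β ^ (1 - (f.1.length : ℤ)))
    (hpav : (Fintype.card A : ℝ) - ∑' f : F, β ^ (1 - (f.1.length : ℤ)) > β + k - 1) :
    ∃ β' : ℝ, (k : ℝ) < β' ∧
      (Summable fun f : F => β' ^ (1 - (f.1.length : ℤ))) ∧
      (Fintype.card A : ℝ) - ∑' f : F, β' ^ (1 - (f.1.length : ℤ)) ≥ β' := by
  obtain ⟨f₀, hf₀, hlen₀⟩ := hnontriv
  have hexp : ∀ f : F, 1 - (f.1.length : ℤ) ≤ 0 := fun f => by
    have := List.length_pos_iff.2 (hne f.1 f.2)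
    omega
  obtain ⟨b, hb, hbs, hpav'⟩ : ∃ b : ℝ, 1 ≤ b ∧
      (Summable fun f : F => b ^ (1 - (f.1.length : ℤ))) ∧
      ∑' f : F, b ^ (1 - (f.1.length : ℤ)) + b + k - 1 < Fintype.card A := by
    rcases le_or_gt 1 β with hβ1 | hβ1
    · exact ⟨β, hβ1, hsum, by linarith⟩
    · have := one_add_tsum_one_zpow_le hexp (i₀ := ⟨f₀, hf₀⟩) (by simp only; omega)
        hβ hβ1.le hsum
      exact ⟨1, le_rfl, summable_zpow_of_le hexp hβ hβ1.le hsum, by linarith⟩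
  exact exists_lt_and_le_sub_tsum_zpow hexp hb (by exact_mod_cast hk) hbs hpav'
end
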